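/- arXiv:2405.03070 — 3 statements merged into one kernel-verified Lean document; each statement's English description precedes it below -/
import Mathlib

section
/- Let f be an element of the unit-flow polytope Γ of a layered graph. For a vertex v and an edge e out of v define the conditional probability f(e | v) = f(e) / (Σ_{e' out of v} f(e')) when v is not the source (with the convention 0/0 = 0), and f(e | v) = f(e) when v is the source. Then the function x on the path set P defined by x(p) = ∏_{ℓ=1}^{L−1} f( (v_ℓ, v_{ℓ+1}) | v_ℓ ) for p = (v_1, …, v_L) is a probability distribution on P (in particular P is nonempty and Σ_{p ∈ P} x(p) = 1), and its marginal flow f_x equals f. Hence every unit flow is realized by a Markovian strategy. -/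
open Classical

variable {V : Type*}

/-- `p : Fin L → V` is a source-to-terminal path of the layered graph. -/
def IsPath (layer : V → ℕ) (src : V) (E : Finset (V × V)) {L : ℕ} (p : Fin L → V) : Prop :=
  (∀ i : Fin L, layer (p i) = (i : ℕ)) ∧
  (∀ i : Fin L, (i : ℕ) = 0 → p i = src) ∧
  (∀ i j : Fin L, (j : ℕ) = (i : ℕ) + 1 → (p i, p j) ∈ E)

/-- The edge `e` lies on the path `p`. -/
def EdgeOnPath {L : ℕ} (p : Fin L → V) (e : V × V) : Prop :=
  ∃ i j : Fin L, (j : ℕ) = (i : ℕ) + 1 ∧ e = (p i, p j)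

/-- `(L, layer, src, E)` is a layered graph. -/
def IsLayeredGraph (L : ℕ) (layer : V → ℕ) (src : V) (E : Finset (V × V)) : Prop :=
  1 < L ∧ (∀ v, layer v < L) ∧ (∀ ℓ < L, ∃ v, layer v = ℓ) ∧
    layer src = 0 ∧ (∀ v, layer v = 0 → v = src) ∧
    ∀ e ∈ E, layer e.2 = layer e.1 + 1

/-- The marginal flow of a distribution `x` over paths:
`f_x(e) = ∑_{p ∈ P, e ∈ p} x(p)`. -/
noncomputable def marginalFlow [Fintype V] (layer : V → ℕ) (src : V) (E : Finset (V × V))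
    {L : ℕ} (x : (Fin L → V) → ℝ) (e : V × V) : ℝ :=
  ∑ p : Fin L → V, if IsPath layer src E p ∧ EdgeOnPath p e then x p else 0

/-- `x` is a probability distribution on the set of paths. -/
def IsPathDist [Fintype V] (layer : V → ℕ) (src : V) (E : Finset (V × V)) {L : ℕ}
    (x : (Fin L → V) → ℝ) : Prop :=
  (∀ p, 0 ≤ x p) ∧ (∀ p, ¬ IsPath layer src E p → x p = 0) ∧ ∑ p : Fin L → V, x p = 1

/-- `f` lies in the unit-flow polytope `Γ`: it is nonnegative on edges, the total flow out of
the source is `1`, and flow is conserved at every vertex not in the first or last layer. -/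
noncomputable def InFlowPolytope (L : ℕ) (layer : V → ℕ) (src : V) (E : Finset (V × V))
    (f : V × V → ℝ) : Prop :=
  (∀ e ∈ E, 0 ≤ f e) ∧
  (∑ e ∈ E.filter (fun e => e.1 = src), f e = 1) ∧
  ∀ v : V, layer v ≠ 0 → layer v ≠ L - 1 →
    (∑ e ∈ E.filter (fun e => e.2 = v), f e) = ∑ e ∈ E.filter (fun e => e.1 = v), f e



/-- The conditional probability `f(e | v)` induced by a flow `f`: at the source it is `f(e)`
itself, and at any other vertex it is `f(e)` divided by the total flow out of `v`
(in Lean, division by zero is zero, matching the convention `0/0 = 0`). -/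
noncomputable def condProb (src : V) (E : Finset (V × V)) (f : V × V → ℝ)
    (v : V) (e : V × V) : ℝ :=
  if v = src then f e else f e / ∑ e' ∈ E.filter (fun e' => e'.1 = v), f e'

/-- The Markovian weight of a path `p = (v_1, …, v_L)`:
`∏_{ℓ=1}^{L-1} f((v_ℓ, v_{ℓ+1}) | v_ℓ)`. -/
noncomputable def markovWeight [Fintype V] (src : V) (E : Finset (V × V)) (f : V × V → ℝ)
    {L : ℕ} (p : Fin L → V) : ℝ :=
  ∏ i : Fin L, ∏ j : Fin L,
    if (j : ℕ) = (i : ℕ) + 1 then condProb src E f (p i) (p i, p j) else 1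

/-! ### Auxiliary definitions and lemmas -/

section Aux

/-- Total flow out of a vertex. -/
noncomputable def outF (E : Finset (V × V)) (f : V × V → ℝ) (v : V) : ℝ :=
  ∑ e ∈ E.filter (fun e => e.1 = v), f e

/-- Total flow into a vertex. -/
noncomputable def inF (E : Finset (V × V)) (f : V × V → ℝ) (v : V) : ℝ :=
  ∑ e ∈ E.filter (fun e => e.2 = v), f e

/-- A path of the layered graph starting at `v` in layer `ℓ0`. -/
def IsPathFrom (layer : V → ℕ) (E : Finset (V × V)) (ℓ0 : ℕ) (v : V) {n : ℕ}
    (p : Fin n → V) : Prop :=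
  (∀ i : Fin n, layer (p i) = ℓ0 + (i : ℕ)) ∧
  (∀ i : Fin n, (i : ℕ) = 0 → p i = v) ∧
  (∀ i j : Fin n, (j : ℕ) = (i : ℕ) + 1 → (p i, p j) ∈ E)

lemma isPath_iff_isPathFrom (layer : V → ℕ) (src : V) (E : Finset (V × V)) {L : ℕ}
    (p : Fin L → V) : IsPath layer src E p ↔ IsPathFrom layer E 0 src p := by
  simp [IsPath, IsPathFrom]

lemma condProb_nonneg (src : V) (E : Finset (V × V)) (f : V × V → ℝ)
    (hf : ∀ e ∈ E, 0 ≤ f e) (v : V) (e : V × V) (he : e ∈ E) :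
    0 ≤ condProb src E f v e := by
  unfold condProb
  split_ifs
  · exact hf e he
  · exact div_nonneg (hf e he)
      (Finset.sum_nonneg fun e' he' => hf e' (Finset.mem_filter.mp he').1)

lemma condProb_of_eq_zero (src : V) (E : Finset (V × V)) (f : V × V → ℝ) (v : V) (e : V × V)
    (h : f e = 0) : condProb src E f v e = 0 := by
  unfold condProb; split_ifs <;> simp [h]

lemma markovWeight_cons [Fintype V] (src : V) (E : Finset (V × V)) (f : V × V → ℝ) {m : ℕ}
    (a : V) (q : Fin (m + 1) → V) :
    markovWeight src E f (Fin.cons a q : Fin (m + 2) → V) =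
      condProb src E f a (a, q 0) * markovWeight src E f q := by
  unfold markovWeight
  rw [Fin.prod_univ_succ]
  congr 1
  · rw [Finset.prod_eq_single (⟨1, by omega⟩ : Fin (m+2))]
    · have h1 : (⟨1, by omega⟩ : Fin (m+2)) = Fin.succ 0 := rfl
      rw [h1, Fin.cons_succ, Fin.cons_zero, if_pos (by simp)]
    · intro j _ hj
      rw [if_neg]
      intro hc
      exact hj (Fin.ext (by simpa using hc))
    · intro h; exact absurd (Finset.mem_univ _) h
  · refine Finset.prod_congr rfl fun i _ => ?_
    rw [Fin.prod_univ_succ]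
    simp only [Fin.cons_succ, Fin.cons_zero, Fin.val_succ, Fin.val_zero]
    rw [if_neg (by omega), one_mul]
    refine Finset.prod_congr rfl fun j _ => ?_
    exact if_congr (by omega) rfl rfl

lemma isPathFrom_cons (layer : V → ℕ) (E : Finset (V × V)) (ℓ0 : ℕ) (v a : V) {m : ℕ}
    (q : Fin (m + 1) → V) :
    IsPathFrom layer E ℓ0 v (Fin.cons a q : Fin (m + 2) → V) ↔
      a = v ∧ layer v = ℓ0 ∧ (v, q 0) ∈ E ∧ IsPathFrom layer E (ℓ0 + 1) (q 0) q := by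
  constructor
  · rintro ⟨h1, h2, h3⟩
    have hav : a = v := by simpa using h2 0 rfl
    subst hav
    refine ⟨rfl, by simpa using h1 0, ?_, ?_, ?_, ?_⟩
    · have h := h3 0 1 (by simp)
      have e1 : (1 : Fin (m+2)) = Fin.succ 0 := rfl
      rw [e1, Fin.cons_succ, Fin.cons_zero] at h
      exact h
    · intro i
      have h := h1 i.succ
      rw [Fin.cons_succ] at h
      simp only [Fin.val_succ] at h
      omega
    · intro i hi
      have : i = 0 := Fin.ext hi
      subst this; rfl
    · intro i j hij
      have := h3 i.succ j.succ (by simp only [Fin.val_succ]; omega)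
      simpa [Fin.cons_succ] using this
  · rintro ⟨hav, hlv, hedge, hq1, hq2, hq3⟩
    subst hav
    refine ⟨?_, ?_, ?_⟩
    · intro i
      rcases Fin.eq_zero_or_eq_succ i with rfl | ⟨k, rfl⟩
      · simpa using hlv
      · have := hq1 k
        rw [Fin.cons_succ]
        simp only [Fin.val_succ]
        omega
    · intro i hi
      have : i = 0 := Fin.ext hi
      subst this; rfl
    · intro i j hij
      rcases Fin.eq_zero_or_eq_succ j with rfl | ⟨l, rfl⟩
      · simp at hij
      · rcases Fin.eq_zero_or_eq_succ i with rfl | ⟨k, rfl⟩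
        · have hl : l = 0 := by
            simp only [Fin.val_succ, Fin.val_zero] at hij
            exact Fin.ext (by simp only [Fin.val_zero]; omega)
          subst hl
          simpa [Fin.cons_succ] using hedge
        · simp only [Fin.val_succ] at hij
          have := hq3 k l (by omega)
          simpa [Fin.cons_succ] using this

/-- Peeling the first vertex off a sum over paths. -/
lemma sum_path_cons [Fintype V] (layer : V → ℕ) (src : V) (E : Finset (V × V)) (f : V × V → ℝ)
    {m : ℕ} (ℓ0 : ℕ) (v : V) (hv : layer v = ℓ0) (G : (Fin (m + 2) → V) → Prop) :
    (∑ p : Fin (m + 2) → V,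
        if IsPathFrom layer E ℓ0 v p ∧ G p then markovWeight src E f p else 0)
      = ∑ e' ∈ E.filter (fun e' => e'.1 = v), condProb src E f v e' *
          ∑ q : Fin (m + 1) → V,
            if IsPathFrom layer E (ℓ0 + 1) e'.2 q ∧ G (Fin.cons v q) then markovWeight src E f q
            else 0 := by
  rw [← Equiv.sum_comp (Fin.consEquiv (fun _ : Fin (m+2) => V))
      (fun p : Fin (m+2) → V =>
        if IsPathFrom layer E ℓ0 v p ∧ G p then markovWeight src E f p else 0)]
  rw [Fintype.sum_prod_type]
  have key : ∀ a : V, ∀ q : Fin (m+1) → V,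
      (if IsPathFrom layer E ℓ0 v ((Fin.consEquiv (fun _ : Fin (m+2) => V)) (a, q)) ∧
          G ((Fin.consEquiv (fun _ : Fin (m+2) => V)) (a, q))
       then markovWeight src E f ((Fin.consEquiv (fun _ : Fin (m+2) => V)) (a, q)) else 0)
      = if a = v then
          (if (v, q 0) ∈ E ∧ IsPathFrom layer E (ℓ0+1) (q 0) q ∧ G (Fin.cons v q)
           then condProb src E f v (v, q 0) * markovWeight src E f q else 0)
        else 0 := by
    intro a q
    have hc : (Fin.consEquiv (fun _ : Fin (m+2) => V)) (a, q) = Fin.cons a q := rfl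
    rw [hc]
    by_cases hav : a = v
    · subst hav
      rw [if_pos rfl, markovWeight_cons]
      by_cases h : (a, q 0) ∈ E ∧ IsPathFrom layer E (ℓ0+1) (q 0) q ∧ G (Fin.cons a q)
      · rw [if_pos h, if_pos ⟨(isPathFrom_cons layer E ℓ0 a a q).mpr ⟨rfl, hv, h.1, h.2.1⟩, h.2.2⟩]
      · rw [if_neg h, if_neg ?_]
        rintro ⟨hp, h3⟩
        rcases (isPathFrom_cons layer E ℓ0 a a q).mp hp with ⟨-, -, h1, h2⟩
        exact h ⟨h1, h2, h3⟩
    · rw [if_neg hav, if_neg ?_]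
      rintro ⟨hp, -⟩
      exact hav ((isPathFrom_cons layer E ℓ0 v a q).mp hp).1
  simp only [key]
  have pull : ∀ a : V,
      (∑ q : Fin (m+1) → V, if a = v then
          (if (v, q 0) ∈ E ∧ IsPathFrom layer E (ℓ0+1) (q 0) q ∧ G (Fin.cons v q)
           then condProb src E f v (v, q 0) * markovWeight src E f q else 0) else 0)
      = if a = v then
          (∑ q : Fin (m+1) → V,
            if (v, q 0) ∈ E ∧ IsPathFrom layer E (ℓ0+1) (q 0) q ∧ G (Fin.cons v q)
            then condProb src E f v (v, q 0) * markovWeight src E f q else 0) else 0 := by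
    intro a; split_ifs <;> simp
  simp only [pull]
  rw [Finset.sum_ite_eq' Finset.univ v]
  simp only [Finset.mem_univ, if_true]
  simp only [Finset.mul_sum]
  rw [Finset.sum_comm]
  refine Finset.sum_congr rfl fun q _ => ?_
  by_cases hqE : (v, q 0) ∈ E
  · have hmem : (v, q 0) ∈ E.filter (fun e' => e'.1 = v) := Finset.mem_filter.mpr ⟨hqE, rfl⟩
    have hz : ∀ e' ∈ E.filter (fun e' => e'.1 = v), e' ≠ (v, q 0) →
        condProb src E f v e' *
          (if IsPathFrom layer E (ℓ0+1) e'.2 q ∧ G (Fin.cons v q)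
           then markovWeight src E f q else 0) = 0 := by
      intro e' he' hne
      rcases Finset.mem_filter.mp he' with ⟨heE, he1⟩
      rw [if_neg, mul_zero]
      rintro ⟨hq, -⟩
      exact hne (Prod.ext_iff.mpr ⟨he1, (hq.2.1 0 rfl).symm⟩)
    rw [Finset.sum_eq_single_of_mem _ hmem hz]
    by_cases h : IsPathFrom layer E (ℓ0+1) (q 0) q ∧ G (Fin.cons v q)
    · rw [if_pos ⟨hqE, h.1, h.2⟩, if_pos h]
    · rw [if_neg (fun hh => h ⟨hh.2.1, hh.2.2⟩), if_neg h, mul_zero]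
  · rw [if_neg (fun hh => hqE hh.1)]
    refine (Finset.sum_eq_zero fun e' he' => ?_).symm
    rcases Finset.mem_filter.mp he' with ⟨heE, he1⟩
    rw [if_neg, mul_zero]
    rintro ⟨hq, -⟩
    have he : e' = (v, q 0) := Prod.ext_iff.mpr ⟨he1, (hq.2.1 0 rfl).symm⟩
    exact hqE (he ▸ heE)


lemma ite_inst_congr {α : Sort*} {c : Prop} {d1 d2 : Decidable c} (a b : α) :
    @ite _ c d1 a b = @ite _ c d2 a b := by
  cases Subsingleton.elim d1 d2; rfl

lemma sum_mul_div (S : Finset (V × V)) (f : V × V → ℝ) (e : V × V) (he : e ∈ S)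
    (hnn : ∀ x ∈ S, 0 ≤ f x) :
    (∑ x ∈ S, f x) * (f e / ∑ x ∈ S, f x) = f e := by
  by_cases hz : (∑ x ∈ S, f x) = 0
  · rw [hz, zero_mul]
    have h1 : f e ≤ 0 := hz ▸ Finset.single_le_sum hnn he
    linarith [hnn e he]
  · rw [mul_comm, div_mul_cancel₀ _ hz]

/-- Normalization of the Markovian suffix weights. -/
lemma suffix_sum_one [Fintype V] (L : ℕ) (layer : V → ℕ) (src : V) (E : Finset (V × V))
    (hG : IsLayeredGraph L layer src E) (f : V × V → ℝ)
    (hf : InFlowPolytope L layer src E f) :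
    ∀ (m ℓ0 : ℕ) (v : V), layer v = ℓ0 → ℓ0 + m = L - 1 →
      (m = 0 ∨ v = src ∨ 0 < outF E f v) →
      (∑ q : Fin (m + 1) → V,
        if IsPathFrom layer E ℓ0 v q then markovWeight src E f q else 0) = 1 := by
  intro m
  induction m with
  | zero =>
    intro ℓ0 v hv _ _
    have hw : ∀ q : Fin 1 → V, markovWeight src E f q = 1 := by
      intro q
      unfold markovWeight
      refine Finset.prod_eq_one fun i _ => Finset.prod_eq_one fun j _ => ?_
      rw [if_neg]
      have := j.isLt; have := i.isLt
      omega
    have hiff : ∀ q : Fin 1 → V, IsPathFrom layer E ℓ0 v q ↔ q = fun _ => v := by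
      intro q
      constructor
      · rintro ⟨-, h2, -⟩
        funext i
        have : i = 0 := Subsingleton.elim i 0
        subst this
        exact h2 0 rfl
      · rintro rfl
        refine ⟨fun i => ?_, fun i _ => rfl, fun i j hij => ?_⟩
        · have : (i : ℕ) = 0 := by have := i.isLt; omega
          simp [this, hv]
        · exfalso; have := j.isLt; have := i.isLt; omega
    calc (∑ q : Fin 1 → V, if IsPathFrom layer E ℓ0 v q then markovWeight src E f q else 0)
        = ∑ q : Fin 1 → V, if q = (fun _ => v) then 1 else 0 := by
          refine Finset.sum_congr rfl fun q _ => ?_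
          exact if_congr (hiff q) (hw q) rfl
      _ = 1 := by rw [Finset.sum_ite_eq' Finset.univ]; simp
  | succ m ih =>
    intro ℓ0 v hv hL hcond
    have hG6 := hG.2.2.2.2.2
    have h := sum_path_cons layer src E f (m := m) ℓ0 v hv (fun _ => True)
    simp only [and_true] at h
    rw [h]
    have hterm : ∀ e' ∈ E.filter (fun e' => e'.1 = v),
        condProb src E f v e' *
          (∑ q : Fin (m+1) → V,
            if IsPathFrom layer E (ℓ0+1) e'.2 q then markovWeight src E f q else 0)
        = condProb src E f v e' := by
      intro e' he'
      rcases Finset.mem_filter.mp he' with ⟨heE, he1⟩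
      rcases lt_or_eq_of_le (hf.1 e' heE) with hpos | hzero
      · rw [ih (ℓ0+1) e'.2 ?_ (by omega) ?_, mul_one]
        · rw [hG6 e' heE, he1, hv]
        · rcases Nat.eq_zero_or_pos m with rfl | hm
          · exact Or.inl rfl
          · refine Or.inr (Or.inr ?_)
            have hcons := hf.2.2 e'.2 ?_ ?_
            · unfold outF
              rw [← hcons]
              calc (0:ℝ) < f e' := hpos
                _ ≤ ∑ e ∈ E.filter (fun e => e.2 = e'.2), f e := by
                    refine Finset.single_le_sum
                      (fun i hi => hf.1 i (Finset.mem_filter.mp hi).1) ?_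
                    exact Finset.mem_filter.mpr ⟨heE, rfl⟩
            · rw [hG6 e' heE]; omega
            · rw [hG6 e' heE, he1, hv]; omega
      · simp [condProb_of_eq_zero src E f v e' hzero.symm]
    rw [Finset.sum_congr rfl hterm]
    by_cases hsrc : v = src
    · subst hsrc
      calc (∑ e' ∈ E.filter (fun e' => e'.1 = v), condProb v E f v e')
          = ∑ e' ∈ E.filter (fun e' => e'.1 = v), f e' :=
            Finset.sum_congr rfl fun e' _ => by simp [condProb]
        _ = 1 := hf.2.1
    · have hout : 0 < outF E f v := by
        rcases hcond with h'|h'|h'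
        · exact absurd h' (Nat.succ_ne_zero m)
        · exact absurd h' hsrc
        · exact h'
      calc (∑ e' ∈ E.filter (fun e' => e'.1 = v), condProb src E f v e')
          = ∑ e' ∈ E.filter (fun e' => e'.1 = v), f e' / outF E f v :=
            Finset.sum_congr rfl fun e' _ => by simp [condProb, hsrc, outF]
        _ = (∑ e' ∈ E.filter (fun e' => e'.1 = v), f e') / outF E f v := by
            rw [Finset.sum_div]
        _ = 1 := by
            have hh : (∑ e' ∈ E.filter (fun e' => e'.1 = v), f e') = outF E f v := rfl
            rw [hh]
            exact div_self (ne_of_gt hout)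

/-- The probability of reaching `t` from `v` in `k` steps (defined by peeling the last step). -/
noncomputable def reach (src : V) (E : Finset (V × V)) (f : V × V → ℝ) : ℕ → V → V → ℝ
  | 0, v, t => if v = t then 1 else 0
  | (k+1), v, t => ∑ e ∈ E.filter (fun e => e.2 = t),
      reach src E f k v e.1 * condProb src E f e.1 e

lemma reach_succ_front (src : V) (E : Finset (V × V)) (f : V × V → ℝ) :
    ∀ (k : ℕ) (v t : V),
      reach src E f (k+1) v t
        = ∑ e' ∈ E.filter (fun e' => e'.1 = v),
            condProb src E f v e' * reach src E f k e'.2 t := by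
  intro k
  induction k with
  | zero =>
    intro v t
    show (∑ e ∈ E.filter (fun e => e.2 = t), reach src E f 0 v e.1 * condProb src E f e.1 e) = _
    rw [Finset.sum_filter, Finset.sum_filter]
    refine Finset.sum_congr rfl fun e heE => ?_
    simp only [reach]
    by_cases h1 : e.1 = v
    · subst h1
      by_cases h2 : e.2 = t <;> simp [h2]
    · have h1' : ¬ v = e.1 := fun h => h1 h.symm
      by_cases h2 : e.2 = t <;> simp [h1, h1', h2]
  | succ k ih =>
    intro v t
    show (∑ e ∈ E.filter (fun e => e.2 = t), reach src E f (k+1) v e.1 * condProb src E f e.1 e) = _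
    calc (∑ e ∈ E.filter (fun e => e.2 = t), reach src E f (k+1) v e.1 * condProb src E f e.1 e)
        = ∑ e ∈ E.filter (fun e => e.2 = t), ∑ e' ∈ E.filter (fun e' => e'.1 = v),
            condProb src E f v e' * reach src E f k e'.2 e.1 * condProb src E f e.1 e := by
          refine Finset.sum_congr rfl fun e _ => ?_
          rw [ih v e.1, Finset.sum_mul]
      _ = ∑ e' ∈ E.filter (fun e' => e'.1 = v), ∑ e ∈ E.filter (fun e => e.2 = t),
            condProb src E f v e' * (reach src E f k e'.2 e.1 * condProb src E f e.1 e) := by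
          rw [Finset.sum_comm]
          exact Finset.sum_congr rfl fun e' _ => Finset.sum_congr rfl fun e _ => by ring
      _ = ∑ e' ∈ E.filter (fun e' => e'.1 = v),
            condProb src E f v e' * reach src E f (k+1) e'.2 t := by
          refine Finset.sum_congr rfl fun e' _ => ?_
          rw [← Finset.mul_sum]
          rfl

lemma reach_src [Fintype V] (L : ℕ) (layer : V → ℕ) (src : V) (E : Finset (V × V))
    (hG : IsLayeredGraph L layer src E) (f : V × V → ℝ) (hf : InFlowPolytope L layer src E f) :
    ∀ (k : ℕ) (t : V), layer t = k →
      reach src E f k src t = if t = src then 1 else inF E f t := by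
  intro k
  induction k with
  | zero =>
    intro t ht
    have : t = src := hG.2.2.2.2.1 t ht
    subst this
    simp [reach]
  | succ k ih =>
    intro t ht
    have hts : t ≠ src := fun h => by rw [h, hG.2.2.2.1] at ht; omega
    rw [if_neg hts]
    show (∑ e ∈ E.filter (fun e => e.2 = t), reach src E f k src e.1 * condProb src E f e.1 e)
      = inF E f t
    unfold inF
    refine Finset.sum_congr rfl fun e he => ?_
    rcases Finset.mem_filter.mp he with ⟨heE, he2⟩
    have hle1 : layer e.1 = k := by
      have := hG.2.2.2.2.2 e heE; rw [he2, ht] at this; omega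
    rw [ih e.1 hle1]
    by_cases hsrc : e.1 = src
    · rw [if_pos hsrc, one_mul]
      unfold condProb
      rw [hsrc, if_pos rfl]
    · rw [if_neg hsrc]
      have hne0 : layer e.1 ≠ 0 := fun h => hsrc (hG.2.2.2.2.1 e.1 h)
      have hneL : layer e.1 ≠ L - 1 := by
        have h2 := hG.2.2.2.2.2 e heE
        have hlt := hG.2.1 e.2
        have hlo := hG.1
        omega
      have hcons : (∑ e' ∈ E.filter (fun e' => e'.2 = e.1), f e')
          = ∑ e' ∈ E.filter (fun e' => e'.1 = e.1), f e' := hf.2.2 e.1 hne0 hneL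
      have hcp : condProb src E f e.1 e
          = f e / ∑ e' ∈ E.filter (fun e' => e'.1 = e.1), f e' := by
        unfold condProb; rw [if_neg hsrc]
      unfold inF
      rw [hcons, hcp]
      exact sum_mul_div _ f e (Finset.mem_filter.mpr ⟨heE, rfl⟩)
        (fun x hx => hf.1 x (Finset.mem_filter.mp hx).1)

lemma edgeOnPath_iff' (layer : V → ℕ) (E : Finset (V × V)) {n ℓ0 : ℕ} (v : V)
    (p : Fin n → V) (hp : IsPathFrom layer E ℓ0 v p) (e : V × V) (k : ℕ)
    (he1 : layer e.1 = ℓ0 + k) (hk : k + 1 < n) :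
    EdgeOnPath p e ↔ (p ⟨k, by omega⟩ = e.1 ∧ p ⟨k + 1, hk⟩ = e.2) := by
  constructor
  · rintro ⟨i, j, hij, rfl⟩
    have hi := hp.1 i
    have hik : (i : ℕ) = k := by
      rw [hi] at he1; omega
    have hik' : i = ⟨k, by omega⟩ := Fin.ext hik
    have hjk' : j = ⟨k + 1, hk⟩ := Fin.ext (by rw [hij, hik])
    constructor
    · rw [← hik']
    · rw [← hjk']
  · rintro ⟨h1, h2⟩
    exact ⟨⟨k, by omega⟩, ⟨k+1, hk⟩, by simp, by rw [h1, h2]⟩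

/-- Marginal of the Markovian path distribution through a fixed edge. -/
lemma sum_path_edge [Fintype V] (L : ℕ) (layer : V → ℕ) (src : V) (E : Finset (V × V))
    (hG : IsLayeredGraph L layer src E) (f : V × V → ℝ) (hf : InFlowPolytope L layer src E f)
    (e : V × V) (he : e ∈ E) :
    ∀ (k m ℓ0 : ℕ) (v : V) (hk : k + 1 < m + 2), layer v = ℓ0 → ℓ0 + (m + 1) = L - 1 →
      layer e.1 = ℓ0 + k →
      (∑ p : Fin (m + 2) → V,
        if IsPathFrom layer E ℓ0 v p ∧
            ((p ⟨k, by omega⟩ = e.1) ∧ p ⟨k + 1, hk⟩ = e.2)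
         then markovWeight src E f p else 0)
      = reach src E f k v e.1 * condProb src E f e.1 e := by
  intro k
  induction k with
  | zero =>
    intro m ℓ0 v hk hv hL he1
    have hpeel := sum_path_cons layer src E f ℓ0 v hv
      (fun p : Fin (m+2) → V => (p ⟨0, by omega⟩ = e.1) ∧ p ⟨0 + 1, hk⟩ = e.2)
    refine Eq.trans (Finset.sum_congr rfl fun p _ => ?_) (hpeel.trans ?_)
    · exact ite_inst_congr _ _
    have hcons0 : ∀ q : Fin (m+1) → V,
        (Fin.cons v q : Fin (m+2) → V) ⟨0, by omega⟩ = v := by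
      intro q
      have h0 : (⟨0, by omega⟩ : Fin (m+2)) = 0 := Fin.ext (by simp)
      rw [h0, Fin.cons_zero]
    have hcons1 : ∀ q : Fin (m+1) → V,
        (Fin.cons v q : Fin (m+2) → V) ⟨0 + 1, hk⟩ = q 0 := by
      intro q
      have h0 : (⟨0 + 1, hk⟩ : Fin (m+2)) = Fin.succ 0 := Fin.ext (by simp)
      rw [h0, Fin.cons_succ]
    simp only [hcons0, hcons1]
    by_cases hve : v = e.1
    · subst hve
      have hmem : e ∈ E.filter (fun e' => e'.1 = e.1) := Finset.mem_filter.mpr ⟨he, rfl⟩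
      have hz : ∀ e' ∈ E.filter (fun e' => e'.1 = e.1), e' ≠ e →
          condProb src E f e.1 e' *
            (∑ q : Fin (m+1) → V,
              if IsPathFrom layer E (ℓ0+1) e'.2 q ∧ ((e.1 = e.1) ∧ q 0 = e.2)
              then markovWeight src E f q else 0) = 0 := by
        intro e' he' hne
        rcases Finset.mem_filter.mp he' with ⟨heE', he1'⟩
        rw [Finset.sum_eq_zero, mul_zero]
        intro q _
        rw [if_neg]
        rintro ⟨hq, -, h2⟩
        have hq0 : q 0 = e'.2 := hq.2.1 0 rfl
        exact hne (Prod.ext_iff.mpr ⟨he1', hq0.symm.trans h2⟩)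
      rw [Finset.sum_eq_single_of_mem e hmem hz]
      have hT : (∑ q : Fin (m+1) → V,
            if IsPathFrom layer E (ℓ0+1) e.2 q ∧ ((e.1 = e.1) ∧ q 0 = e.2)
            then markovWeight src E f q else 0)
          = ∑ q : Fin (m+1) → V,
              if IsPathFrom layer E (ℓ0+1) e.2 q then markovWeight src E f q else 0 := by
        refine Finset.sum_congr rfl fun q _ => ?_
        refine if_congr ⟨fun h' => h'.1, fun h' => ⟨h', rfl, h'.2.1 0 rfl⟩⟩ rfl rfl
      rw [hT]
      rcases lt_or_eq_of_le (hf.1 e he) with hpos | hzero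
      · rw [suffix_sum_one L layer src E hG f hf m (ℓ0+1) e.2 ?l1 (by omega) ?l2, mul_one]
        · simp [reach]
        case l1 =>
          have := hG.2.2.2.2.2 e he
          omega
        case l2 =>
          rcases Nat.eq_zero_or_pos m with rfl | hm
          · exact Or.inl rfl
          · refine Or.inr (Or.inr ?_)
            have hco := hf.2.2 e.2 ?_ ?_
            · unfold outF
              rw [← hco]
              calc (0:ℝ) < f e := hpos
                _ ≤ ∑ x ∈ E.filter (fun x => x.2 = e.2), f x := by
                    refine Finset.single_le_sum
                      (fun i hi => hf.1 i (Finset.mem_filter.mp hi).1) ?_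
                    exact Finset.mem_filter.mpr ⟨he, rfl⟩
            · have := hG.2.2.2.2.2 e he; omega
            · have := hG.2.2.2.2.2 e he; omega
      · simp [condProb_of_eq_zero src E f e.1 e hzero.symm]
    · have hz : ∀ e' ∈ E.filter (fun e' => e'.1 = v),
          condProb src E f v e' *
            (∑ q : Fin (m+1) → V,
              if IsPathFrom layer E (ℓ0+1) e'.2 q ∧ ((v = e.1) ∧ q 0 = e.2)
              then markovWeight src E f q else 0) = 0 := by
        intro e' _
        rw [Finset.sum_eq_zero, mul_zero]
        intro q _
        exact if_neg (fun h' => hve h'.2.1)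
      rw [Finset.sum_eq_zero hz]
      have hr : reach src E f 0 v e.1 = 0 := by simp [reach, hve]
      rw [hr, zero_mul]
  | succ k ih =>
    intro m ℓ0 v hk hv hL he1
    obtain ⟨m', rfl⟩ : ∃ m', m = m' + 1 := ⟨m - 1, by omega⟩
    have hpeel := sum_path_cons layer src E f ℓ0 v hv
      (fun p : Fin (m'+1+2) → V => (p ⟨k+1, by omega⟩ = e.1) ∧ p ⟨k+1+1, hk⟩ = e.2)
    refine Eq.trans (Finset.sum_congr rfl fun p _ => ?_) (hpeel.trans ?_)
    · exact ite_inst_congr _ _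
    have hc1 : ∀ q : Fin (m'+2) → V,
        (Fin.cons v q : Fin (m'+1+2) → V) ⟨k+1, by omega⟩ = q ⟨k, by omega⟩ := by
      intro q
      have h0 : (⟨k+1, by omega⟩ : Fin (m'+1+2)) = Fin.succ ⟨k, by omega⟩ := Fin.ext (by simp)
      rw [h0, Fin.cons_succ]
    have hc2 : ∀ q : Fin (m'+2) → V,
        (Fin.cons v q : Fin (m'+1+2) → V) ⟨k+1+1, hk⟩ = q ⟨k+1, by omega⟩ := by
      intro q
      have h0 : (⟨k+1+1, hk⟩ : Fin (m'+1+2)) = Fin.succ ⟨k+1, by omega⟩ := Fin.ext (by simp)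
      rw [h0, Fin.cons_succ]
    simp only [hc1, hc2]
    rw [reach_succ_front, Finset.sum_mul]
    refine Finset.sum_congr rfl fun e' he' => ?_
    rcases Finset.mem_filter.mp he' with ⟨heE', he1'⟩
    have hlv' : layer e'.2 = ℓ0 + 1 := by
      have := hG.2.2.2.2.2 e' heE'
      rw [he1', hv] at this
      omega
    rw [ih m' (ℓ0+1) e'.2 (by omega) hlv' (by omega) (by omega)]
    ring

end Aux

/-- Every unit flow is realized by a Markovian strategy: the function on the path set given by
the product of the conditional probabilities of the flow `f` along the path is a probability
distribution on the (nonempty) path set, and its marginal flow equals `f`. -/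
theorem markov_strategy_realizes_flow
    [Fintype V] (L : ℕ) (layer : V → ℕ) (src : V) (E : Finset (V × V))
    (hG : IsLayeredGraph L layer src E)
    (f : V × V → ℝ) (hf : InFlowPolytope L layer src E f) :
    (∃ p : Fin L → V, IsPath layer src E p) ∧
    IsPathDist layer src E
      (fun p : Fin L → V => if IsPath layer src E p then markovWeight src E f p else 0) ∧
    ∀ e ∈ E, marginalFlow layer src E
      (fun p : Fin L → V => if IsPath layer src E p then markovWeight src E f p else 0) e
      = f e := by
  have hL2 : 1 < L := hG.1
  obtain ⟨Lm, rfl⟩ : ∃ Lm, L = Lm + 2 := ⟨L - 2, by omega⟩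
  have hsum : (∑ p : Fin (Lm + 2) → V,
      if IsPath layer src E p then markovWeight src E f p else 0) = 1 := by
    have h : (∑ p : Fin (Lm + 1 + 1) → V,
        if IsPathFrom layer E 0 src p then markovWeight src E f p else 0) = 1 :=
      suffix_sum_one (Lm+2) layer src E hG f hf (Lm+1) 0 src hG.2.2.2.1 (by omega)
        (Or.inr (Or.inl rfl))
    have h' : (∑ p : Fin (Lm + 2) → V,
        if IsPathFrom layer E 0 src p then markovWeight src E f p else 0) = 1 := h
    calc (∑ p : Fin (Lm+2) → V, if IsPath layer src E p then markovWeight src E f p else 0)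
        = ∑ p : Fin (Lm+2) → V,
            if IsPathFrom layer E 0 src p then markovWeight src E f p else 0 :=
          Finset.sum_congr rfl fun p _ =>
            if_congr (isPath_iff_isPathFrom layer src E p) rfl rfl
      _ = 1 := h'
  have hex : ∃ p : Fin (Lm+2) → V, IsPath layer src E p := by
    by_contra hno
    push_neg at hno
    rw [Finset.sum_eq_zero (fun p _ => if_neg (hno p))] at hsum
    exact zero_ne_one hsum
  have hnn : ∀ p : Fin (Lm+2) → V,
      0 ≤ (if IsPath layer src E p then markovWeight src E f p else 0) := by
    intro p
    split_ifs with hp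
    · unfold markovWeight
      refine Finset.prod_nonneg fun i _ => Finset.prod_nonneg fun j _ => ?_
      split_ifs with hij
      · exact condProb_nonneg src E f hf.1 (p i) (p i, p j) (hp.2.2 i j hij)
      · exact zero_le_one
    · exact le_refl 0
  refine ⟨hex, ⟨hnn, fun p hp => if_neg hp, hsum⟩, ?_⟩
  intro e he
  have hle2 : layer e.2 = layer e.1 + 1 := hG.2.2.2.2.2 e he
  have hlt : layer e.2 < Lm + 2 := hG.2.1 e.2
  have hk : layer e.1 + 1 < Lm + 2 := by omega
  have hstep : marginalFlow layer src E
      (fun p : Fin (Lm+2) → V => if IsPath layer src E p then markovWeight src E f p else 0) e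
      = ∑ p : Fin (Lm+2) → V,
          if IsPathFrom layer E 0 src p ∧
              ((p ⟨layer e.1, by omega⟩ = e.1) ∧ p ⟨layer e.1 + 1, hk⟩ = e.2)
          then markovWeight src E f p else 0 := by
    unfold marginalFlow
    refine Finset.sum_congr rfl fun p _ => ?_
    beta_reduce
    by_cases hp : IsPath layer src E p
    · have hp' := (isPath_iff_isPathFrom layer src E p).mp hp
      rw [if_pos hp]
      refine if_congr ?_ rfl rfl
      constructor
      · rintro ⟨-, hep⟩
        exact ⟨hp', (edgeOnPath_iff' layer E src p hp' e (layer e.1) (by omega) hk).mp hep⟩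
      · rintro ⟨-, h1, h2⟩
        exact ⟨hp, (edgeOnPath_iff' layer E src p hp' e (layer e.1) (by omega) hk).mpr ⟨h1, h2⟩⟩
    · rw [if_neg (fun h => hp h.1),
        if_neg (fun h => hp ((isPath_iff_isPathFrom layer src E p).mpr h.1))]
  rw [hstep,
    sum_path_edge (Lm+2) layer src E hG f hf e he (layer e.1) Lm 0 src hk hG.2.2.2.1
      (by omega) (by omega),
    reach_src (Lm+2) layer src E hG f hf (layer e.1) e.1 rfl]
  by_cases hsrc : e.1 = src
  · rw [if_pos hsrc, one_mul]
    unfold condProb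
    rw [if_pos hsrc]
  · rw [if_neg hsrc]
    have hne0 : layer e.1 ≠ 0 := fun h => hsrc (hG.2.2.2.2.1 e.1 h)
    have hneL : layer e.1 ≠ (Lm+2) - 1 := by omega
    have hcons : (∑ e' ∈ E.filter (fun e' => e'.2 = e.1), f e')
        = ∑ e' ∈ E.filter (fun e' => e'.1 = e.1), f e' := hf.2.2 e.1 hne0 hneL
    have hcp : condProb src E f e.1 e
        = f e / ∑ e' ∈ E.filter (fun e' => e'.1 = e.1), f e' := by
      unfold condProb; rw [if_neg hsrc]
    unfold inF
    rw [hcons, hcp]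
    exact sum_mul_div _ f e (Finset.mem_filter.mpr ⟨he, rfl⟩)
      (fun x hx => hf.1 x (Finset.mem_filter.mp hx).1)
end

section
/- Let G_d = (V, E_d) and G_a = (V, E_a) be layered graphs on the same layered vertex set with nonempty path sets P_d and P_a, let Γ_d and Γ_a be their unit-flow polytopes, and let Q : E_d × E_a → ℝ. Then the minimax value of the path formulation equals the minimax value of the flow formulation: inf over probability distributions x_d on P_d of sup over probability distributions x_a on P_a of Σ_{p_d} Σ_{p_a} x_d(p_d) x_a(p_a) u_LIN(p_d, p_a) equals inf_{f_d ∈ Γ_d} sup_{f_a ∈ Γ_a} Σ_{e_d ∈ E_d} Σ_{e_a ∈ E_a} Q(e_d, e_a) f_d(e_d) f_a(e_a). -/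
open Classical

variable {V : Type*}

/-- The finite set of edges lying on the path `p`. -/
noncomputable def pathEdges [Fintype V] {L : ℕ} (p : Fin L → V) : Finset (V × V) :=
  Finset.univ.filter (fun e => EdgeOnPath p e)

/-- The expected linear utility `u_LIN` of a pair of path distributions:
`∑_{p_d ∈ P_d} ∑_{p_a ∈ P_a} x_d(p_d) x_a(p_a) ∑_{e_d ∈ p_d} ∑_{e_a ∈ p_a} Q(e_d, e_a)`. -/
noncomputable def pathPayoff [Fintype V] (layer : V → ℕ) (src : V)
    (Ed Ea : Finset (V × V)) (Q : V × V → V × V → ℝ) {L : ℕ}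
    (xd xa : (Fin L → V) → ℝ) : ℝ :=
  ∑ pd ∈ Finset.univ.filter (fun p : Fin L → V => IsPath layer src Ed p),
    ∑ pa ∈ Finset.univ.filter (fun p : Fin L → V => IsPath layer src Ea p),
      xd pd * xa pa * ∑ ed ∈ pathEdges pd, ∑ ea ∈ pathEdges pa, Q ed ea

namespace LayeredAux

variable {L : ℕ} {layer : V → ℕ} {src : V} {E : Finset (V × V)}

/-- determination of the position of an edge on a path by its layer -/
lemma edgeOn_pins {p : Fin L → V} (hp : IsPath layer src E p) {a b : V}
    (h : EdgeOnPath p (a, b)) :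
    ∃ h2 : layer a + 1 < L, p ⟨layer a, by omega⟩ = a ∧ p ⟨layer a + 1, h2⟩ = b := by
  obtain ⟨i, j, hij, he⟩ := h
  injection he with ha hb
  subst ha; subst hb
  have hla : layer (p i) = (i : ℕ) := hp.1 i
  have h2 : layer (p i) + 1 < L := by have := j.isLt; omega
  refine ⟨h2, congrArg p (Fin.ext (by simpa using hla)), congrArg p (Fin.ext ?_)⟩
  simp; omega

lemma edgeOn_of_pins {p : Fin L → V} {a b : V} {ℓ : ℕ} (h1 : ℓ < L) (h2 : ℓ + 1 < L)
    (hpa : p ⟨ℓ, h1⟩ = a) (hpb : p ⟨ℓ + 1, h2⟩ = b) : EdgeOnPath p (a, b) :=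
  ⟨⟨ℓ, h1⟩, ⟨ℓ + 1, h2⟩, rfl, by rw [hpa, hpb]⟩

lemma path_src {p : Fin L → V} (hp : IsPath layer src E p) (h0 : 0 < L) :
    p ⟨0, h0⟩ = src := hp.2.1 _ rfl

/-- per-path counting: edges of `p` with a given head `v` -/
lemma sum_filter_snd (hG : IsLayeredGraph L layer src E) {p : Fin L → V}
    (hp : IsPath layer src E p) (v : V) (hv0 : layer v ≠ 0) (hvL : layer v < L) (c : ℝ) :
    (∑ e ∈ E.filter (fun e => e.2 = v), if EdgeOnPath p e then c else 0)
      = if p ⟨layer v, hvL⟩ = v then c else 0 := by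
  rw [Finset.sum_filter]
  simp only [← ite_and]
  by_cases hpv : p ⟨layer v, hvL⟩ = v
  · rw [if_pos hpv]
    have h1 : layer v - 1 < L := by omega
    have h2 : layer v - 1 + 1 < L := by omega
    have hmem : (p ⟨layer v - 1, h1⟩, p ⟨layer v - 1 + 1, h2⟩) ∈ E :=
      hp.2.2 _ _ rfl
    have hkey : (⟨layer v - 1 + 1, h2⟩ : Fin L) = ⟨layer v, hvL⟩ := Fin.ext (by simp; omega)
    refine (Finset.sum_eq_single_of_mem _ hmem ?_).trans ?_
    · intro e heE hne
      rw [if_neg]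
      rintro ⟨hev, hon⟩
      obtain ⟨a, b⟩ := e
      obtain ⟨hb2, hpa, hpb⟩ := edgeOn_pins hp hon
      simp only at hev
      have hlb : layer b = layer a + 1 := hG.2.2.2.2.2 _ heE
      have hlav : layer a = layer v - 1 := by
        have : layer b = layer v := by rw [hev]
        omega
      apply hne
      have e1 : (⟨layer v - 1, h1⟩ : Fin L) = ⟨layer a, by omega⟩ := Fin.ext (by simp [hlav])
      have e2 : (⟨layer v - 1 + 1, h2⟩ : Fin L) = ⟨layer a + 1, hb2⟩ := Fin.ext (by simp; omega)
      rw [e1, e2, hpa, hpb]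
    · rw [if_pos]
      exact ⟨by simpa only [hkey] using hpv, edgeOn_of_pins h1 h2 rfl rfl⟩
  · rw [if_neg hpv]
    apply Finset.sum_eq_zero
    intro e heE
    rw [if_neg]
    rintro ⟨hev, hon⟩
    obtain ⟨a, b⟩ := e
    obtain ⟨hb2, hpa, hpb⟩ := edgeOn_pins hp hon
    simp only at hev
    have hlb : layer b = layer a + 1 := hG.2.2.2.2.2 _ heE
    apply hpv
    have e2 : (⟨layer a + 1, hb2⟩ : Fin L) = ⟨layer v, hvL⟩ := Fin.ext (by
      simp
      have : layer b = layer v := by rw [hev]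
      omega)
    rw [← e2, hpb, hev]

/-- per-path counting: edges of `p` with a given tail `v` -/
lemma sum_filter_fst (hG : IsLayeredGraph L layer src E) {p : Fin L → V}
    (hp : IsPath layer src E p) (v : V) (hvL : layer v + 1 < L) (c : ℝ) :
    (∑ e ∈ E.filter (fun e => e.1 = v), if EdgeOnPath p e then c else 0)
      = if p ⟨layer v, by omega⟩ = v then c else 0 := by
  rw [Finset.sum_filter]
  simp only [← ite_and]
  by_cases hpv : p ⟨layer v, by omega⟩ = v
  · rw [if_pos hpv]
    have h1 : layer v < L := by omega
    have hmem : (p ⟨layer v, h1⟩, p ⟨layer v + 1, hvL⟩) ∈ E := hp.2.2 _ _ rfl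
    refine (Finset.sum_eq_single_of_mem _ hmem ?_).trans ?_
    · intro e heE hne
      rw [if_neg]
      rintro ⟨hev, hon⟩
      obtain ⟨a, b⟩ := e
      obtain ⟨hb2, hpa, hpb⟩ := edgeOn_pins hp hon
      simp only at hev
      have hlav : layer a = layer v := by rw [hev]
      apply hne
      have e1 : (⟨layer v, h1⟩ : Fin L) = ⟨layer a, by omega⟩ := Fin.ext (by simp [hlav])
      have e2 : (⟨layer v + 1, hvL⟩ : Fin L) = ⟨layer a + 1, hb2⟩ := Fin.ext (by simp [hlav])
      rw [e1, e2, hpa, hpb]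
    · rw [if_pos]
      exact ⟨hpv, edgeOn_of_pins h1 hvL rfl rfl⟩
  · rw [if_neg hpv]
    apply Finset.sum_eq_zero
    intro e heE
    rw [if_neg]
    rintro ⟨hev, hon⟩
    obtain ⟨a, b⟩ := e
    obtain ⟨hb2, hpa, hpb⟩ := edgeOn_pins hp hon
    simp only at hev
    apply hpv
    have e1 : (⟨layer a, by omega⟩ : Fin L) = ⟨layer v, by omega⟩ := Fin.ext (by simp [hev])
    rw [← e1, hpa, hev]

end LayeredAux

namespace LayeredAux

variable [Fintype V] {L : ℕ} {layer : V → ℕ} {src : V} {E : Finset (V × V)}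

lemma sum_marginal_fst (hG : IsLayeredGraph L layer src E) (x : (Fin L → V) → ℝ)
    (v : V) (hv : layer v + 1 < L) :
    ∑ e ∈ E.filter (fun e => e.1 = v), marginalFlow layer src E x e
      = ∑ p : Fin L → V,
          if IsPath layer src E p ∧ p ⟨layer v, by omega⟩ = v then x p else 0 := by
  unfold marginalFlow
  rw [Finset.sum_comm]
  refine Finset.sum_congr rfl (fun p _ => ?_)
  by_cases hp : IsPath layer src E p
  · simp only [hp, true_and]
    exact sum_filter_fst hG hp v hv (x p)
  · simp only [hp, false_and, if_false, Finset.sum_const_zero]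

lemma sum_marginal_snd (hG : IsLayeredGraph L layer src E) (x : (Fin L → V) → ℝ)
    (v : V) (hv0 : layer v ≠ 0) (hvL : layer v < L) :
    ∑ e ∈ E.filter (fun e => e.2 = v), marginalFlow layer src E x e
      = ∑ p : Fin L → V,
          if IsPath layer src E p ∧ p ⟨layer v, hvL⟩ = v then x p else 0 := by
  unfold marginalFlow
  rw [Finset.sum_comm]
  refine Finset.sum_congr rfl (fun p _ => ?_)
  by_cases hp : IsPath layer src E p
  · simp only [hp, true_and]
    exact sum_filter_snd hG hp v hv0 hvL (x p)
  · simp only [hp, false_and, if_false, Finset.sum_const_zero]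

lemma sum_marginal_src (hG : IsLayeredGraph L layer src E) (x : (Fin L → V) → ℝ) :
    ∑ e ∈ E.filter (fun e => e.1 = src), marginalFlow layer src E x e
      = ∑ p : Fin L → V, if IsPath layer src E p then x p else 0 := by
  have hv : layer src + 1 < L := by have := hG.1; have := hG.2.2.2.1; omega
  rw [sum_marginal_fst hG x src hv]
  refine Finset.sum_congr rfl (fun p _ => ?_)
  by_cases hp : IsPath layer src E p
  · have : p ⟨layer src, by omega⟩ = src := by
      have h0 : (⟨layer src, by omega⟩ : Fin L) = ⟨0, by omega⟩ :=
        Fin.ext (by simp [hG.2.2.2.1])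
      rw [h0]; exact path_src hp (by omega)
    simp [hp, this]
  · simp [hp]

lemma marginal_mem_polytope (hG : IsLayeredGraph L layer src E) {x : (Fin L → V) → ℝ}
    (hx : IsPathDist layer src E x) :
    InFlowPolytope L layer src E (marginalFlow layer src E x) := by
  refine ⟨fun e _ => Finset.sum_nonneg (fun p _ => ?_), ?_, ?_⟩
  · split
    · exact hx.1 p
    · exact le_refl 0
  · rw [sum_marginal_src hG x]
    rw [← hx.2.2]
    refine Finset.sum_congr rfl (fun p _ => ?_)
    by_cases hp : IsPath layer src E p
    · rw [if_pos hp]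
    · rw [if_neg hp, hx.2.1 p hp]
  · intro v hv0 hvL'
    have hvL : layer v < L := hG.2.1 v
    have hv1 : layer v + 1 < L := by have := hG.1; omega
    rw [sum_marginal_snd hG x v hv0 hvL, sum_marginal_fst hG x v hv1]

end LayeredAux

namespace LayeredAux

variable [Fintype V] {L : ℕ} {layer : V → ℕ} {src : V} {E : Finset (V × V)}

lemma pathEdges_eq {p : Fin L → V} (hp : IsPath layer src E p) :
    pathEdges p = E.filter (fun e => EdgeOnPath p e) := by
  ext e
  simp only [pathEdges, Finset.mem_filter, Finset.mem_univ, true_and]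
  constructor
  · rintro h
    refine ⟨?_, h⟩
    obtain ⟨i, j, hij, rfl⟩ := h
    exact hp.2.2 i j hij
  · exact fun h => h.2

lemma pathPayoff_eq_flow (layer : V → ℕ) (src : V) (Ed Ea : Finset (V × V))
    (Q : V × V → V × V → ℝ) {L : ℕ} (xd xa : (Fin L → V) → ℝ) :
    pathPayoff layer src Ed Ea Q xd xa
      = ∑ ed ∈ Ed, ∑ ea ∈ Ea,
          Q ed ea * marginalFlow layer src Ed xd ed * marginalFlow layer src Ea xa ea := by
  -- canonical 4-fold form, summand
  set t : (Fin L → V) → (Fin L → V) → (V × V) → (V × V) → ℝ := fun pd pa ed ea =>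
    Q ed ea * (if IsPath layer src Ed pd ∧ EdgeOnPath pd ed then xd pd else 0)
      * (if IsPath layer src Ea pa ∧ EdgeOnPath pa ea then xa pa else 0) with ht
  have hrhs : (∑ ed ∈ Ed, ∑ ea ∈ Ea,
      Q ed ea * marginalFlow layer src Ed xd ed * marginalFlow layer src Ea xa ea)
      = ∑ ed ∈ Ed, ∑ ea ∈ Ea, ∑ pd : Fin L → V, ∑ pa : Fin L → V, t pd pa ed ea := by
    refine Finset.sum_congr rfl (fun ed _ => Finset.sum_congr rfl (fun ea _ => ?_))
    unfold marginalFlow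
    simp only [Finset.mul_sum, Finset.sum_mul]
    exact Finset.sum_comm
  rw [hrhs]
  -- swap sums to bring pd, pa out
  have swapA : ∀ (s : Finset (V × V)) (F : (V × V) → (Fin L → V) → ℝ),
      (∑ e ∈ s, ∑ p : Fin L → V, F e p) = ∑ p : Fin L → V, ∑ e ∈ s, F e p :=
    fun s F => Finset.sum_comm
  have hswap : (∑ ed ∈ Ed, ∑ ea ∈ Ea, ∑ pd : Fin L → V, ∑ pa : Fin L → V, t pd pa ed ea)
      = ∑ pd : Fin L → V, ∑ pa : Fin L → V, ∑ ed ∈ Ed, ∑ ea ∈ Ea, t pd pa ed ea := by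
    rw [Finset.sum_congr rfl (fun ed _ => swapA Ea (fun ea pd => ∑ pa : Fin L → V, t pd pa ed ea)),
      swapA Ed]
    refine Finset.sum_congr rfl (fun pd _ => ?_)
    rw [Finset.sum_congr rfl (fun ed _ => Finset.sum_comm), swapA Ed]
  rw [hswap]
  -- now compare with the path payoff
  unfold pathPayoff
  rw [Finset.sum_filter]
  refine Finset.sum_congr rfl (fun pd _ => ?_)
  by_cases hpd : IsPath layer src Ed pd
  · rw [if_pos hpd, Finset.sum_filter]
    refine Finset.sum_congr rfl (fun pa _ => ?_)
    by_cases hpa : IsPath layer src Ea pa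
    · rw [if_pos hpa]
      have : ∀ ed ea, t pd pa ed ea =
          if EdgeOnPath pd ed ∧ EdgeOnPath pa ea then Q ed ea * xd pd * xa pa else 0 := by
        intro ed ea
        rw [ht]
        simp only [hpd, true_and, hpa]
        by_cases h1 : EdgeOnPath pd ed <;> by_cases h2 : EdgeOnPath pa ea <;>
          simp [h1, h2, mul_comm, mul_assoc, mul_left_comm]
      calc xd pd * xa pa * ∑ ed ∈ pathEdges pd, ∑ ea ∈ pathEdges pa, Q ed ea
          = ∑ ed ∈ Ed.filter (fun e => EdgeOnPath pd e),
              ∑ ea ∈ Ea.filter (fun e => EdgeOnPath pa e),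
                Q ed ea * xd pd * xa pa := by
            rw [pathEdges_eq hpd, pathEdges_eq hpa, Finset.mul_sum]
            refine Finset.sum_congr rfl (fun ed _ => ?_)
            rw [Finset.mul_sum]
            refine Finset.sum_congr rfl (fun ea _ => ?_)
            ring
        _ = ∑ ed ∈ Ed, ∑ ea ∈ Ea, t pd pa ed ea := by
            rw [Finset.sum_filter]
            refine Finset.sum_congr rfl (fun ed _ => ?_)
            by_cases h1 : EdgeOnPath pd ed
            · rw [if_pos h1, Finset.sum_filter]
              refine Finset.sum_congr rfl (fun ea _ => ?_)
              rw [this]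
              by_cases h2 : EdgeOnPath pa ea <;> simp [h1, h2]
            · rw [if_neg h1]
              refine (Finset.sum_eq_zero (fun ea _ => ?_)).symm
              rw [this]
              simp [h1]
    · rw [if_neg hpa]
      refine (Finset.sum_eq_zero (fun ed _ => Finset.sum_eq_zero (fun ea _ => ?_))).symm
      rw [ht]
      simp [hpa]
  · rw [if_neg hpd]
    refine (Finset.sum_eq_zero (fun ed _ => Finset.sum_eq_zero (fun ea _ => ?_))).symm
    rw [ht]
    simp [hpd]

end LayeredAux

namespace LayeredAux

variable [Fintype V]

/-- product of consecutive weights along a tuple -/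
noncomputable def wProd (w : V → V → ℝ) {L : ℕ} (p : Fin L → V) : ℝ :=
  ∏ i : Fin L, if h : (i : ℕ) + 1 < L then w (p i) (p ⟨(i : ℕ) + 1, h⟩) else 1

omit [Fintype V] in
lemma wProd_castSucc (w : V → V → ℝ) {k : ℕ} (p : Fin (k + 1) → V) :
    wProd w p = ∏ i : Fin k, w (p i.castSucc) (p i.succ) := by
  unfold wProd
  rw [Fin.prod_univ_castSucc, dif_neg (by simp), mul_one]
  refine Finset.prod_congr rfl (fun i _ => ?_)
  rw [dif_pos (by have := i.isLt; simp only [Fin.coe_castSucc]; omega)]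
  congr 1

/-- concatenation of two tuples -/
noncomputable def glue {m n : ℕ} (q : Fin m → V) (r : Fin n → V) : Fin (m + n) → V :=
  fun i => if h : (i : ℕ) < m then q ⟨i, h⟩ else r ⟨(i : ℕ) - m, by have := i.isLt; omega⟩

omit [Fintype V] in
lemma glue_lt {m n : ℕ} (q : Fin m → V) (r : Fin n → V) (i : Fin (m + n)) (h : (i : ℕ) < m) :
    glue q r i = q ⟨i, h⟩ := dif_pos h

omit [Fintype V] in
lemma glue_ge {m n : ℕ} (q : Fin m → V) (r : Fin n → V) (i : Fin (m + n)) (h : ¬ (i : ℕ) < m) :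
    glue q r i = r ⟨(i : ℕ) - m, by have := i.isLt; omega⟩ := dif_neg h

lemma sum_glue {m n : ℕ} (F : (Fin (m + n) → V) → ℝ) :
    ∑ p : Fin (m + n) → V, F p = ∑ q : Fin m → V, ∑ r : Fin n → V, F (glue q r) := by
  have hbij : Function.Bijective (fun qr : (Fin m → V) × (Fin n → V) => glue qr.1 qr.2) := by
    rw [Function.bijective_iff_has_inverse]
    refine ⟨fun p => (fun i => p ⟨i, by have := i.isLt; omega⟩,
      fun j => p ⟨m + j, by have := j.isLt; omega⟩), fun qr => ?_, fun p => ?_⟩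
    · obtain ⟨q, r⟩ := qr
      refine Prod.ext (funext fun i => ?_) (funext fun i => ?_)
      · dsimp only
        rw [glue_lt _ _ _ (by simpa using i.isLt)]
      · dsimp only
        rw [glue_ge _ _ _ (by simp)]
        congr 1
        exact Fin.ext (by simp)
    · funext i
      dsimp only
      unfold glue
      by_cases h : (i : ℕ) < m
      · rw [dif_pos h]
      · rw [dif_neg h]
        show p ⟨m + ((i : ℕ) - m), by have := i.isLt; omega⟩ = p i
        exact congrArg p (Fin.ext (by simp only [Fin.val_mk]; omega))
  have := Fintype.sum_bijective _ hbij (fun qr : (Fin m → V) × (Fin n → V) => F (glue qr.1 qr.2))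
    F (fun x => rfl)
  rw [← this, Fintype.sum_prod_type]

lemma pow_entry (M : Matrix V V ℝ) (k : ℕ) (u v : V) :
    (M ^ k) u v = ∑ q : Fin (k + 1) → V,
      if q 0 = u ∧ q (Fin.last k) = v then ∏ i : Fin k, M (q i.castSucc) (q i.succ) else 0 := by
  induction k generalizing u with
  | zero =>
    rw [pow_zero]
    rw [Fintype.sum_equiv (Equiv.funUnique (Fin 1) V) _
      (fun z => if z = u ∧ z = v then (1:ℝ) else 0) (fun q => by
        simp only [Equiv.funUnique_apply]
        rfl)]
    by_cases huv : u = v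
    · subst huv
      rw [Matrix.one_apply_eq]
      rw [Finset.sum_eq_single_of_mem u (Finset.mem_univ u) (fun z _ hz => if_neg (by tauto))]
      simp
    · rw [Matrix.one_apply_ne huv]
      exact (Finset.sum_eq_zero (fun z _ => if_neg (fun h => huv (h.1.symm.trans h.2)))).symm
  | succ k ih =>
    have hsplit : ∑ q : Fin (k + 2) → V,
        (if q 0 = u ∧ q (Fin.last (k + 1)) = v then ∏ i : Fin (k + 1), M (q i.castSucc) (q i.succ) else 0)
        = ∑ x : V, ∑ t : Fin (k + 1) → V,
            (if x = u ∧ t (Fin.last k) = v then M x (t 0) * ∏ i : Fin k, M (t i.castSucc) (t i.succ) else 0) := by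
      rw [(Fintype.sum_equiv (Fin.consEquiv (fun _ : Fin (k+2) => V)) _ _ (fun x => rfl)).symm,
        Fintype.sum_prod_type]
      refine Finset.sum_congr rfl (fun x _ => Finset.sum_congr rfl (fun t _ => ?_))
      have hce : (Fin.consEquiv fun _ : Fin (k+2) => V) (x, t) = Fin.cons x t := rfl
      rw [hce]
      have h0 : Fin.cons (α := fun _ : Fin (k+2) => V) x t 0 = x := rfl
      have hlast : Fin.cons (α := fun _ : Fin (k+2) => V) x t (Fin.last (k + 1)) = t (Fin.last k) := by
        rw [← Fin.succ_last, Fin.cons_succ]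
      rw [h0, hlast]
      refine if_congr Iff.rfl ?_ rfl
      rw [Fin.prod_univ_succ]
      congr 1
    rw [pow_succ', Matrix.mul_apply, hsplit, Finset.sum_comm]
    have hl : ∀ z, M u z * (M ^ k) z v = ∑ t : Fin (k+1) → V,
        (if t 0 = z ∧ t (Fin.last k) = v then M u z * ∏ i : Fin k, M (t i.castSucc) (t i.succ) else 0) := by
      intro z
      rw [ih z, Finset.mul_sum]
      exact Finset.sum_congr rfl (fun t _ => by rw [mul_ite, mul_zero])
    rw [Finset.sum_congr rfl (fun z _ => hl z), Finset.sum_comm]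
    refine Finset.sum_congr rfl (fun t _ => ?_)
    simp only [ite_and, Finset.sum_ite_eq, Finset.sum_ite_eq', Finset.mem_univ, if_true]

lemma row_sum (M : Matrix V V ℝ) (k : ℕ) (u : V) :
    ∑ v : V, (M ^ k) u v = ∑ q : Fin (k + 1) → V,
      if q 0 = u then ∏ i : Fin k, M (q i.castSucc) (q i.succ) else 0 := by
  rw [Finset.sum_congr rfl (fun v _ => pow_entry M k u v), Finset.sum_comm]
  refine Finset.sum_congr rfl (fun q _ => ?_)
  by_cases hq : q 0 = u
  · simp only [hq, ite_and, if_true, Finset.sum_ite_eq, Finset.mem_univ]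
  · simp [hq]

end LayeredAux

namespace LayeredAux

variable [Fintype V]

omit [Fintype V] in
lemma glue_val {m n : ℕ} (q : Fin m → V) (r : Fin n → V) (i : Fin (m + n)) (j : Fin m)
    (h : (i : ℕ) = (j : ℕ)) : glue q r i = q j := by
  rw [glue_lt _ _ _ (by have := j.isLt; omega)]
  exact congrArg q (Fin.ext (by simpa using h))

omit [Fintype V] in
lemma glue_val2 {m n : ℕ} (q : Fin m → V) (r : Fin n → V) (i : Fin (m + n)) (j : Fin n)
    (h : (i : ℕ) = m + (j : ℕ)) : glue q r i = r j := by
  rw [glue_ge _ _ _ (by omega)]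
  exact congrArg r (Fin.ext (by simp [h]))

omit [Fintype V] in
lemma wProd_glue (w : V → V → ℝ) {m' n' : ℕ} (q : Fin (m' + 1) → V) (r : Fin (n' + 1) → V) :
    wProd w (glue q r) = wProd w q * w (q (Fin.last m')) (r 0) * wProd w r := by
  rw [wProd_castSucc w q, wProd_castSucc w r]
  unfold wProd
  rw [Fin.prod_univ_add, Fin.prod_univ_castSucc, Fin.prod_univ_castSucc]
  have h2 : (if h : ((Fin.castAdd (n' + 1) (Fin.last m') : Fin ((m'+1)+(n'+1))) : ℕ) + 1 < (m'+1)+(n'+1)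
      then w (glue q r (Fin.castAdd (n' + 1) (Fin.last m')))
        (glue q r ⟨((Fin.castAdd (n' + 1) (Fin.last m') : Fin ((m'+1)+(n'+1))) : ℕ) + 1, h⟩) else 1)
      = w (q (Fin.last m')) (r 0) := by
    rw [dif_pos (by simp)]
    congr 1
    · exact glue_val q r _ _ (by simp)
    · exact glue_val2 q r _ _ (by simp)
  have h4 : (if h : ((Fin.natAdd (m' + 1) (Fin.last n') : Fin ((m'+1)+(n'+1))) : ℕ) + 1 < (m'+1)+(n'+1)
      then w (glue q r (Fin.natAdd (m' + 1) (Fin.last n')))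
        (glue q r ⟨((Fin.natAdd (m' + 1) (Fin.last n') : Fin ((m'+1)+(n'+1))) : ℕ) + 1, h⟩) else 1)
      = 1 := by
    rw [dif_neg (by simp only [Fin.coe_natAdd, Fin.val_last]; omega)]
  rw [h2, h4, mul_one]
  congr 1
  · congr 1
    refine Finset.prod_congr rfl (fun i _ => ?_)
    rw [dif_pos (by have := i.isLt; simp only [Fin.coe_castAdd, Fin.coe_castSucc]; omega)]
    congr 1
    · exact glue_val q r _ _ (by simp)
    · exact glue_val q r _ _ (by simp)
  · refine Finset.prod_congr rfl (fun j _ => ?_)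
    rw [dif_pos (by have := j.isLt; simp only [Fin.coe_natAdd, Fin.coe_castSucc]; omega)]
    congr 1
    · exact glue_val2 q r _ _ (by simp)
    · exact glue_val2 q r _ _ (by simp only [Fin.coe_natAdd, Fin.coe_castSucc, Fin.val_succ, Fin.val_mk]; omega)

lemma sum_pin (w : V → V → ℝ) (m' n' : ℕ) (src a b : V) :
    (∑ p : Fin ((m' + 1) + (n' + 1)) → V,
      if p ⟨0, by omega⟩ = src ∧ p ⟨m', by omega⟩ = a ∧ p ⟨m' + 1, by omega⟩ = b
        then wProd w p else 0)
    = ((Matrix.of w) ^ m') src a * w a b * ∑ z : V, ((Matrix.of w) ^ n') b z := by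
  rw [sum_glue]
  have step : ∀ (q : Fin (m' + 1) → V) (r : Fin (n' + 1) → V),
      (if glue q r ⟨0, by omega⟩ = src ∧ glue q r ⟨m', by omega⟩ = a ∧ glue q r ⟨m' + 1, by omega⟩ = b
        then wProd w (glue q r) else 0)
      = ((if q 0 = src ∧ q (Fin.last m') = a then wProd w q else 0) * w a b)
          * (if r 0 = b then wProd w r else 0) := by
    intro q r
    have g0 : glue q r ⟨0, by omega⟩ = q 0 := glue_val q r _ _ (by simp)
    have gm : glue q r ⟨m', by omega⟩ = q (Fin.last m') := glue_val q r _ _ (by simp)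
    have gm1 : glue q r ⟨m' + 1, by omega⟩ = r 0 := glue_val2 q r _ _ (by simp)
    rw [g0, gm, gm1, wProd_glue]
    by_cases h1 : q 0 = src
    · by_cases h2 : q (Fin.last m') = a
      · by_cases h3 : r 0 = b
        · rw [if_pos ⟨h1, h2, h3⟩, if_pos ⟨h1, h2⟩, if_pos h3, h2, h3]
        · rw [if_neg (by tauto), if_neg h3, mul_zero]
      · rw [if_neg (by tauto), if_neg (by tauto)]
        simp
    · rw [if_neg (by tauto), if_neg (by tauto)]
      simp
  rw [Finset.sum_congr rfl (fun q _ => Finset.sum_congr rfl (fun r _ => step q r))]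
  have hF : (∑ q : Fin (m' + 1) → V, if q 0 = src ∧ q (Fin.last m') = a then wProd w q else 0)
      = ((Matrix.of w) ^ m') src a := by
    rw [pow_entry]
    refine Finset.sum_congr rfl (fun q _ => ?_)
    rw [wProd_castSucc]
    rfl
  have hG : (∑ r : Fin (n' + 1) → V, if r 0 = b then wProd w r else 0)
      = ∑ z : V, ((Matrix.of w) ^ n') b z := by
    rw [row_sum]
    refine Finset.sum_congr rfl (fun r _ => ?_)
    rw [wProd_castSucc]
    rfl
  calc ∑ q : Fin (m' + 1) → V, ∑ r : Fin (n' + 1) → V,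
        ((if q 0 = src ∧ q (Fin.last m') = a then wProd w q else 0) * w a b)
          * (if r 0 = b then wProd w r else 0)
      = ∑ q : Fin (m' + 1) → V,
          ((if q 0 = src ∧ q (Fin.last m') = a then wProd w q else 0) * w a b)
            * ∑ r : Fin (n' + 1) → V, (if r 0 = b then wProd w r else 0) := by
        exact Finset.sum_congr rfl (fun q _ => (Finset.mul_sum _ _ _).symm)
    _ = ((∑ q : Fin (m' + 1) → V, (if q 0 = src ∧ q (Fin.last m') = a then wProd w q else 0)) * w a b)
            * ∑ r : Fin (n' + 1) → V, (if r 0 = b then wProd w r else 0) := by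
        rw [← Finset.sum_mul, ← Finset.sum_mul]
    _ = _ := by rw [hF, hG]

end LayeredAux

namespace LayeredAux

variable [Fintype V] {L : ℕ} {layer : V → ℕ} {src : V} {E : Finset (V × V)}

noncomputable def outFlow (E : Finset (V × V)) (f : V × V → ℝ) (v : V) : ℝ :=
  ∑ e ∈ E.filter (fun e => e.1 = v), f e

noncomputable def inFlow (E : Finset (V × V)) (f : V × V → ℝ) (v : V) : ℝ :=
  ∑ e ∈ E.filter (fun e => e.2 = v), f e

noncomputable def wgt (E : Finset (V × V)) (f : V × V → ℝ) (v u : V) : ℝ :=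
  if (v, u) ∈ E then f (v, u) / outFlow E f v else 0

lemma sum_out (g : V × V → ℝ) (v : V) :
    ∑ e ∈ E.filter (fun e => e.1 = v), g e = ∑ u : V, if (v, u) ∈ E then g (v, u) else 0 := by
  rw [← Finset.sum_filter]
  refine Finset.sum_bij' (fun e _ => e.2) (fun u _ => (v, u)) ?_ ?_ ?_ ?_ ?_
  · intro e he
    simp only [Finset.mem_filter, Finset.mem_univ, true_and] at he ⊢
    have : e = (v, e.2) := by
      obtain ⟨e1, e2⟩ := e
      simp only at he ⊢
      rw [he.2]
    rw [← this]
    exact he.1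
  · intro u hu
    simp only [Finset.mem_filter, Finset.mem_univ, true_and] at hu ⊢
    exact ⟨hu, trivial⟩
  · intro e he
    simp only [Finset.mem_filter] at he
    obtain ⟨e1, e2⟩ := e
    simp only at he ⊢
    rw [he.2]
  · intro u _
    rfl
  · intro e he
    simp only [Finset.mem_filter] at he
    obtain ⟨e1, e2⟩ := e
    simp only at he ⊢
    rw [he.2]

lemma sum_in (g : V × V → ℝ) (v : V) :
    ∑ e ∈ E.filter (fun e => e.2 = v), g e = ∑ u : V, if (u, v) ∈ E then g (u, v) else 0 := by
  rw [← Finset.sum_filter]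
  refine Finset.sum_bij' (fun e _ => e.1) (fun u _ => (u, v)) ?_ ?_ ?_ ?_ ?_
  · intro e he
    simp only [Finset.mem_filter, Finset.mem_univ, true_and] at he ⊢
    have : e = (e.1, v) := by
      obtain ⟨e1, e2⟩ := e
      simp only at he ⊢
      rw [he.2]
    rw [← this]
    exact he.1
  · intro u hu
    simp only [Finset.mem_filter, Finset.mem_univ, true_and] at hu ⊢
    exact ⟨hu, trivial⟩
  · intro e he
    simp only [Finset.mem_filter] at he
    obtain ⟨e1, e2⟩ := e
    simp only at he ⊢
    rw [he.2]
  · intro u _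
    rfl
  · intro e he
    simp only [Finset.mem_filter] at he
    obtain ⟨e1, e2⟩ := e
    simp only at he ⊢
    rw [he.2]

lemma outFlow_nonneg {f : V × V → ℝ} (hnn : ∀ e ∈ E, 0 ≤ f e) (v : V) :
    0 ≤ outFlow E f v :=
  Finset.sum_nonneg (fun e he => hnn e (Finset.mem_filter.mp he).1)

lemma wgt_nonneg {f : V × V → ℝ} (hnn : ∀ e ∈ E, 0 ≤ f e) (v u : V) :
    0 ≤ wgt E f v u := by
  unfold wgt
  split
  · exact div_nonneg (hnn _ (by assumption)) (outFlow_nonneg hnn v)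
  · exact le_refl 0

lemma f_le_outFlow {f : V × V → ℝ} (hnn : ∀ e ∈ E, 0 ≤ f e) {e : V × V} (he : e ∈ E) :
    f e ≤ outFlow E f e.1 :=
  Finset.single_le_sum (fun e' he' => hnn e' (Finset.mem_filter.mp he').1)
    (Finset.mem_filter.mpr ⟨he, rfl⟩)

lemma f_le_inFlow {f : V × V → ℝ} (hnn : ∀ e ∈ E, 0 ≤ f e) {e : V × V} (he : e ∈ E) :
    f e ≤ inFlow E f e.2 :=
  Finset.single_le_sum (fun e' he' => hnn e' (Finset.mem_filter.mp he').1)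
    (Finset.mem_filter.mpr ⟨he, rfl⟩)

lemma sum_wgt {f : V × V → ℝ} (v : V) (h : outFlow E f v ≠ 0) :
    ∑ u : V, wgt E f v u = 1 := by
  unfold wgt
  have hstep : ∀ u : V, (if (v, u) ∈ E then f (v, u) / outFlow E f v else 0)
      = (if (v, u) ∈ E then f (v, u) else 0) / outFlow E f v := by
    intro u; split <;> simp
  rw [Finset.sum_congr rfl (fun u _ => hstep u)]
  rw [← Finset.sum_div]
  rw [← sum_out (E := E) f v]
  exact div_self h

lemma Apow (hG : IsLayeredGraph L layer src E) {f : V × V → ℝ}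
    (hf : InFlowPolytope L layer src E f) :
    ∀ k, 1 ≤ k → k + 1 < L → ∀ v, layer v = k →
      ((Matrix.of (wgt E f)) ^ k) src v = inFlow E f v := by
  intro k
  induction k with
  | zero => omega
  | succ k ih =>
    intro _ hkL v hv
    have hsum : inFlow E f v = ∑ u : V, if (u, v) ∈ E then f (u, v) else 0 := sum_in f v
    rcases Nat.eq_zero_or_pos k with hk0 | hkpos
    · subst hk0
      rw [pow_one]
      have hout : outFlow E f src = 1 := hf.2.1
      have hM : (Matrix.of (wgt E f)) src v = if (src, v) ∈ E then f (src, v) else 0 := by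
        show wgt E f src v = _
        unfold wgt
        rw [hout, div_one]
      rw [hM, hsum]
      refine (Finset.sum_eq_single (s := (Finset.univ : Finset V))
        (f := fun u => if (u, v) ∈ E then f (u, v) else 0) src
        (fun u _ hu => ?_) (fun h => absurd (Finset.mem_univ src) h)).symm
      rw [if_neg]
      intro huE
      have := hG.2.2.2.2.2 _ huE
      simp only at this
      have hu0 : layer u = 0 := by omega
      exact hu (hG.2.2.2.2.1 u hu0)
    · rw [pow_succ, Matrix.mul_apply]
      have hterm : ∀ u : V, ((Matrix.of (wgt E f)) ^ k) src u * (Matrix.of (wgt E f)) u v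
          = if (u, v) ∈ E then f (u, v) else 0 := by
        intro u
        by_cases hu : (u, v) ∈ E
        · have hlu : layer u = k := by
            have := hG.2.2.2.2.2 _ hu
            simp only at this
            omega
          rw [ih hkpos (by omega) u hlu]
          have hcons : inFlow E f u = outFlow E f u := hf.2.2 u (by omega) (by omega)
          rw [hcons]
          have hM : (Matrix.of (wgt E f)) u v = f (u, v) / outFlow E f u := by
            show wgt E f u v = _
            unfold wgt
            rw [if_pos hu]
          rw [hM, if_pos hu]
          by_cases hout : outFlow E f u = 0
          · have hf0 : f (u, v) = 0 := le_antisymm (hout ▸ f_le_outFlow hf.1 hu) (hf.1 _ hu)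
            rw [hout, hf0]
            simp
          · rw [mul_comm, div_mul_cancel₀ _ hout]
        · have hM : (Matrix.of (wgt E f)) u v = 0 := by
            show wgt E f u v = 0
            unfold wgt
            rw [if_neg hu]
          rw [hM, mul_zero, if_neg hu]
      rw [Finset.sum_congr rfl (fun u _ => hterm u), ← hsum]

lemma Bpow (hG : IsLayeredGraph L layer src E) {f : V × V → ℝ}
    (hf : InFlowPolytope L layer src E f) :
    ∀ k, ∀ v, layer v + k + 1 = L → (k = 0 ∨ 0 < outFlow E f v) →
      ∑ z : V, ((Matrix.of (wgt E f)) ^ k) v z = 1 := by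
  intro k
  induction k with
  | zero =>
    intro v _ _
    rw [pow_zero]
    simp [Matrix.one_apply]
  | succ k ih =>
    intro v hL hcond
    have hout : 0 < outFlow E f v := hcond.resolve_left (by omega)
    rw [pow_succ']
    have happ : ∀ z, ((Matrix.of (wgt E f)) * (Matrix.of (wgt E f)) ^ k) v z
        = ∑ u : V, wgt E f v u * ((Matrix.of (wgt E f)) ^ k) u z := fun z => Matrix.mul_apply
    rw [Finset.sum_congr rfl (fun z _ => happ z), Finset.sum_comm]
    have hterm : ∀ u : V, (∑ z : V, wgt E f v u * ((Matrix.of (wgt E f)) ^ k) u z)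
        = wgt E f v u := by
      intro u
      rw [← Finset.mul_sum]
      by_cases hw : wgt E f v u = 0
      · rw [hw, zero_mul]
      · have hu : (v, u) ∈ E := by
          by_contra h
          exact hw (if_neg h)
        have hfvu : f (v, u) ≠ 0 := by
          intro h0
          apply hw
          unfold wgt
          rw [if_pos hu, h0, zero_div]
        have hfpos : 0 < f (v, u) := lt_of_le_of_ne (hf.1 _ hu) (Ne.symm hfvu)
        have hlu : layer u = layer v + 1 := hG.2.2.2.2.2 _ hu
        have hsum1 : ∑ z : V, ((Matrix.of (wgt E f)) ^ k) u z = 1 := by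
          apply ih u (by omega)
          rcases Nat.eq_zero_or_pos k with hk0 | hkpos
          · exact Or.inl hk0
          · refine Or.inr ?_
            have hcons : inFlow E f u = outFlow E f u := hf.2.2 u (by omega) (by omega)
            have : f (v, u) ≤ inFlow E f u := f_le_inFlow hf.1 hu
            rw [hcons] at this
            linarith
        rw [hsum1, mul_one]
    rw [Finset.sum_congr rfl (fun u _ => hterm u)]
    exact sum_wgt v (ne_of_gt hout)

lemma path_of_src_edges (hG : IsLayeredGraph L layer src E) {p : Fin L → V}
    (h0 : ∀ h : 0 < L, p ⟨0, h⟩ = src)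
    (hE : ∀ i j : Fin L, (j : ℕ) = (i : ℕ) + 1 → (p i, p j) ∈ E) :
    IsPath layer src E p := by
  have hlayer' : ∀ iv : ℕ, ∀ hi : iv < L, layer (p ⟨iv, hi⟩) = iv := by
    intro iv
    induction iv with
    | zero =>
      intro hi
      rw [h0 hi]
      exact hG.2.2.2.1
    | succ iv ihv =>
      intro hi
      have hi' : iv < L := by omega
      have hedge := hE ⟨iv, hi'⟩ ⟨iv + 1, hi⟩ rfl
      have h2 := hG.2.2.2.2.2 _ hedge
      simp only at h2
      rw [h2, ihv hi']
  have hlayer : ∀ i : Fin L, layer (p i) = (i : ℕ) := by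
    intro i
    obtain ⟨iv, hi⟩ := i
    exact hlayer' iv hi
  refine ⟨hlayer, fun i hi => ?_, hE⟩
  have : i = ⟨0, by omega⟩ := Fin.ext hi
  rw [this]
  exact h0 _

end LayeredAux

namespace LayeredAux

variable [Fintype V] {L : ℕ} {layer : V → ℕ} {src : V} {E : Finset (V × V)}

lemma marginal_decomp (hG : IsLayeredGraph L layer src E) {f : V × V → ℝ}
    (hf : InFlowPolytope L layer src E f) :
    ∀ e ∈ E, marginalFlow layer src E
      (fun p : Fin L → V => if IsPath layer src E p then wProd (wgt E f) p else 0) e = f e := by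
  rintro ⟨a, b⟩ he
  have hlb : layer b = layer a + 1 := hG.2.2.2.2.2 _ he
  have hbL : layer b < L := hG.2.1 b
  obtain ⟨n', hn⟩ : ∃ n', L = (layer a + 1) + (n' + 1) := ⟨L - layer a - 2, by omega⟩
  subst hn
  have hguard : ∀ p : Fin ((layer a + 1) + (n' + 1)) → V,
      (if IsPath layer src E p ∧ EdgeOnPath p (a, b) then
        (if IsPath layer src E p then wProd (wgt E f) p else 0) else 0)
      = (if p ⟨0, by omega⟩ = src ∧ p ⟨layer a, by omega⟩ = a ∧ p ⟨layer a + 1, by omega⟩ = b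
          then wProd (wgt E f) p else 0) := by
    intro p
    by_cases hp : IsPath layer src E p
    · by_cases hon : EdgeOnPath p (a, b)
      · rw [if_pos ⟨hp, hon⟩, if_pos hp]
        obtain ⟨h2, hpa, hpb⟩ := edgeOn_pins hp hon
        rw [if_pos ⟨path_src hp (by omega), hpa, hpb⟩]
      · rw [if_neg (by tauto)]
        symm
        rw [if_neg]
        rintro ⟨h0, hpa, hpb⟩
        exact hon (edgeOn_of_pins (by omega) (by omega) hpa hpb)
    · rw [if_neg (by tauto)]
      symm
      by_cases hc : p ⟨0, by omega⟩ = src ∧ p ⟨layer a, by omega⟩ = a ∧ p ⟨layer a + 1, by omega⟩ = b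
      · rw [if_pos hc]
        have hbad : ¬ ∀ i j : Fin ((layer a + 1) + (n' + 1)), (j : ℕ) = (i : ℕ) + 1 →
            (p i, p j) ∈ E := by
          intro hE
          exact hp (path_of_src_edges hG (fun h => hc.1) hE)
        push_neg at hbad
        obtain ⟨i, j, hij, hnotE⟩ := hbad
        unfold wProd
        apply Finset.prod_eq_zero (Finset.mem_univ i)
        rw [dif_pos (by have := j.isLt; omega)]
        have hj : (⟨(i : ℕ) + 1, by have := j.isLt; omega⟩ : Fin ((layer a + 1) + (n' + 1))) = j :=
          Fin.ext (by simp [hij])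
        rw [hj]
        exact if_neg hnotE
      · rw [if_neg hc]
  unfold marginalFlow
  dsimp only
  rw [Finset.sum_congr rfl (fun p _ => hguard p), sum_pin]
  -- arithmetic
  rcases Nat.eq_zero_or_pos (layer a) with hl0 | hlpos
  · have ha : a = src := hG.2.2.2.2.1 a hl0
    subst ha
    rw [hl0]
    rw [pow_zero, Matrix.one_apply_eq]
    have hout1 : outFlow E f a = 1 := hf.2.1
    have hW : wgt E f a b = f (a, b) := by
      unfold wgt
      rw [if_pos he, hout1, div_one]
    rw [hW]
    by_cases hf0 : f (a, b) = 0
    · rw [hf0]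
      ring
    · have hfpos : 0 < f (a, b) := lt_of_le_of_ne (hf.1 _ he) (Ne.symm hf0)
      have hB : ∑ z : V, ((Matrix.of (wgt E f)) ^ n') b z = 1 := by
        apply Bpow hG hf n' b (by omega)
        rcases Nat.eq_zero_or_pos n' with hn0 | hnpos
        · exact Or.inl hn0
        · refine Or.inr ?_
          have hcons : inFlow E f b = outFlow E f b := hf.2.2 b (by omega) (by omega)
          have hle : f (a, b) ≤ inFlow E f b := f_le_inFlow hf.1 he
          rw [hcons] at hle
          linarith
      rw [hB]
      ring
  · have hA : ((Matrix.of (wgt E f)) ^ (layer a)) src a = inFlow E f a :=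
      Apow hG hf (layer a) hlpos (by omega) a rfl
    have hcons : inFlow E f a = outFlow E f a := hf.2.2 a (by omega) (by omega)
    rw [hA, hcons]
    by_cases hout : outFlow E f a = 0
    · have hf0 : f (a, b) = 0 := le_antisymm (hout ▸ f_le_outFlow hf.1 he) (hf.1 _ he)
      rw [hout, hf0]
      ring
    · have hW : wgt E f a b = f (a, b) / outFlow E f a := by
        unfold wgt
        rw [if_pos he]
      rw [hW]
      by_cases hf0 : f (a, b) = 0
      · rw [hf0]
        simp
      · have hfpos : 0 < f (a, b) := lt_of_le_of_ne (hf.1 _ he) (Ne.symm hf0)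
        have hB : ∑ z : V, ((Matrix.of (wgt E f)) ^ n') b z = 1 := by
          apply Bpow hG hf n' b (by omega)
          rcases Nat.eq_zero_or_pos n' with hn0 | hnpos
          · exact Or.inl hn0
          · refine Or.inr ?_
            have hcons2 : inFlow E f b = outFlow E f b := hf.2.2 b (by omega) (by omega)
            have hle : f (a, b) ≤ inFlow E f b := f_le_inFlow hf.1 he
            rw [hcons2] at hle
            linarith
        rw [hB, mul_one, mul_comm, div_mul_cancel₀ _ hout]

lemma exists_pathDist (hG : IsLayeredGraph L layer src E) {f : V × V → ℝ}
    (hf : InFlowPolytope L layer src E f) :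
    ∃ x : (Fin L → V) → ℝ, IsPathDist layer src E x ∧
      ∀ e ∈ E, marginalFlow layer src E x e = f e := by
  set x : (Fin L → V) → ℝ := fun p => if IsPath layer src E p then wProd (wgt E f) p else 0 with hx
  have hmarg : ∀ e ∈ E, marginalFlow layer src E x e = f e := marginal_decomp hG hf
  refine ⟨x, ⟨?_, ?_, ?_⟩, hmarg⟩
  · intro p
    rw [hx]
    dsimp only
    split
    · refine Finset.prod_nonneg (fun i _ => ?_)
      split
      · exact wgt_nonneg hf.1 _ _
      · exact zero_le_one
    · exact le_refl 0
  · intro p hp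
    rw [hx]
    exact if_neg hp
  · have h1 : ∑ e ∈ E.filter (fun e => e.1 = src), marginalFlow layer src E x e = 1 := by
      rw [Finset.sum_congr rfl (fun e heE => hmarg e (Finset.mem_filter.mp heE).1)]
      exact hf.2.1
    rw [sum_marginal_src hG x] at h1
    rw [← h1]
    refine Finset.sum_congr rfl (fun p _ => ?_)
    by_cases hp : IsPath layer src E p
    · rw [if_pos hp]
    · rw [if_neg hp]
      exact if_neg hp

end LayeredAux

/-- The minimax value of the path formulation of a layered graph security game with linear
utilities equals the minimax value of its flow formulation. -/
theorem minimax_paths_eq_minimax_flows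
    [Fintype V] (L : ℕ) (layer : V → ℕ) (src : V) (Ed Ea : Finset (V × V))
    (hGd : IsLayeredGraph L layer src Ed) (hGa : IsLayeredGraph L layer src Ea)
    (hPd : ∃ p : Fin L → V, IsPath layer src Ed p)
    (hPa : ∃ p : Fin L → V, IsPath layer src Ea p)
    (Q : V × V → V × V → ℝ) :
    (⨅ xd : {x : (Fin L → V) → ℝ // IsPathDist layer src Ed x},
      ⨆ xa : {x : (Fin L → V) → ℝ // IsPathDist layer src Ea x},
        pathPayoff layer src Ed Ea Q (xd : (Fin L → V) → ℝ) (xa : (Fin L → V) → ℝ))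
    = ⨅ fd : {f : V × V → ℝ // InFlowPolytope L layer src Ed f},
        ⨆ fa : {f : V × V → ℝ // InFlowPolytope L layer src Ea f},
          ∑ ed ∈ Ed, ∑ ea ∈ Ea,
            Q ed ea * (fd : V × V → ℝ) ed * (fa : V × V → ℝ) ea := by

  classical
  set FP : (V × V → ℝ) → (V × V → ℝ) → ℝ :=
    fun fd fa => ∑ ed ∈ Ed, ∑ ea ∈ Ea, Q ed ea * fd ed * fa ea with hFP
  have key : ∀ xd xa : (Fin L → V) → ℝ, pathPayoff layer src Ed Ea Q xd xa
      = FP (marginalFlow layer src Ed xd) (marginalFlow layer src Ea xa) :=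
    fun xd xa => LayeredAux.pathPayoff_eq_flow layer src Ed Ea Q xd xa
  have hFPd : ∀ (fd fd' fa : V × V → ℝ), (∀ e ∈ Ed, fd e = fd' e) → FP fd fa = FP fd' fa := by
    intro fd fd' fa h
    refine Finset.sum_congr rfl (fun ed hed => Finset.sum_congr rfl (fun ea _ => ?_))
    rw [h ed hed]
  have hFPa : ∀ (fd fa fa' : V × V → ℝ), (∀ e ∈ Ea, fa e = fa' e) → FP fd fa = FP fd fa' := by
    intro fd fa fa' h
    refine Finset.sum_congr rfl (fun ed _ => Finset.sum_congr rfl (fun ea hea => ?_))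
    rw [h ea hea]
  have hsup : ∀ xd : {x : (Fin L → V) → ℝ // IsPathDist layer src Ed x},
      (⨆ xa : {x : (Fin L → V) → ℝ // IsPathDist layer src Ea x},
        pathPayoff layer src Ed Ea Q (xd : (Fin L → V) → ℝ) (xa : (Fin L → V) → ℝ))
      = ⨆ fa : {f : V × V → ℝ // InFlowPolytope L layer src Ea f},
          FP (marginalFlow layer src Ed (xd : (Fin L → V) → ℝ)) (fa : V × V → ℝ) := by
    intro xd
    have hr : Set.range (fun xa : {x : (Fin L → V) → ℝ // IsPathDist layer src Ea x} =>
          pathPayoff layer src Ed Ea Q (xd : (Fin L → V) → ℝ) (xa : (Fin L → V) → ℝ))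
        = Set.range (fun fa : {f : V × V → ℝ // InFlowPolytope L layer src Ea f} =>
          FP (marginalFlow layer src Ed (xd : (Fin L → V) → ℝ)) (fa : V × V → ℝ)) := by
      ext y
      constructor
      · rintro ⟨xa, rfl⟩
        exact ⟨⟨marginalFlow layer src Ea (xa : (Fin L → V) → ℝ),
          LayeredAux.marginal_mem_polytope hGa xa.2⟩, (key _ _).symm⟩
      · rintro ⟨fa, rfl⟩
        obtain ⟨xa, hdist, hm⟩ := LayeredAux.exists_pathDist hGa fa.2
        refine ⟨⟨xa, hdist⟩, ?_⟩
        show pathPayoff layer src Ed Ea Q (xd : (Fin L → V) → ℝ) xa = _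
        rw [key]
        exact hFPa _ _ _ hm
    show sSup _ = sSup _
    rw [hr]
  have hr2 : Set.range (fun xd : {x : (Fin L → V) → ℝ // IsPathDist layer src Ed x} =>
        ⨆ xa : {x : (Fin L → V) → ℝ // IsPathDist layer src Ea x},
          pathPayoff layer src Ed Ea Q (xd : (Fin L → V) → ℝ) (xa : (Fin L → V) → ℝ))
      = Set.range (fun fd : {f : V × V → ℝ // InFlowPolytope L layer src Ed f} =>
        ⨆ fa : {f : V × V → ℝ // InFlowPolytope L layer src Ea f},
          FP (fd : V × V → ℝ) (fa : V × V → ℝ)) := by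
    ext y
    constructor
    · rintro ⟨xd, rfl⟩
      refine ⟨⟨marginalFlow layer src Ed (xd : (Fin L → V) → ℝ),
        LayeredAux.marginal_mem_polytope hGd xd.2⟩, ?_⟩
      exact (hsup xd).symm
    · rintro ⟨fd, rfl⟩
      obtain ⟨xd, hdist, hm⟩ := LayeredAux.exists_pathDist hGd fd.2
      refine ⟨⟨xd, hdist⟩, ?_⟩
      dsimp only
      rw [hsup ⟨xd, hdist⟩]
      exact iSup_congr (fun fa => hFPd _ _ _ hm)
  show sInf _ = sInf _
  rw [hr2]
end

section
/- There exists a finite two-player zero-sum game in which no Nash equilibrium has a Markovian (product-form) attacker strategy. Concretely, in the game where the attacker's pure strategies are pairs in {U,D} × {U,D} (written UU, UD, DU, DD), the defender's pure strategies are {U, D}, and the attacker payoff is u(UU,U)=0, u(UU,D)=1, u(UD,U)=0, u(UD,D)=0, u(DU,U)=0, u(DU,D)=0, u(DD,U)=1, u(DD,D)=0, the unique optimal attacker mixed strategy x_a* (which assigns probability 1/2 to UU and to DD, and 0 to UD and DU) is not a product distribution: there exist no p, q ∈ [0,1] with x_a*(UU) = p·q, x_a*(UD) = p·(1−q), x_a*(DU)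 = (1−p)·q, and x_a*(DD) = (1−p)·(1−q). Hence no Nash equilibrium of this game has an attacker strategy of product form. -/
/-- `x` is a mixed strategy (probability distribution) over the finite set `S` of pure
strategies. -/
def Mixed {S : Type*} [Fintype S] (x : S → ℝ) : Prop :=
  (∀ s, 0 ≤ x s) ∧ ∑ s, x s = 1

/-- Bilinear extension of the attacker payoff `u` to mixed strategies:
`u(x_d, x_a) = ∑_d ∑_a x_d(d) x_a(a) u(d, a)`. -/
noncomputable def expPay {D A : Type*} [Fintype D] [Fintype A]
    (u : D → A → ℝ) (xd : D → ℝ) (xa : A → ℝ) : ℝ :=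
  ∑ d, ∑ a, xd d * xa a * u d a

/-- `max_{a ∈ A} u(x_d, a)`, the best pure-attacker payoff against the defender mixed
strategy `x_d`. -/
noncomputable def maxPure {D A : Type*} [Fintype D] [Fintype A]
    (u : D → A → ℝ) (xd : D → ℝ) : ℝ :=
  ⨆ a, ∑ d, xd d * u d a

/-- `min_{d ∈ D} u(d, x_a)`, the worst pure-defender payoff against the attacker mixed
strategy `x_a`. -/
noncomputable def minPure {D A : Type*} [Fintype D] [Fintype A]
    (u : D → A → ℝ) (xa : A → ℝ) : ℝ :=
  ⨅ d, ∑ a, xa a * u d a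

/-- A defender mixed strategy is optimal if it minimizes `max_{a ∈ A} u(x_d, a)` over all
defender mixed strategies. -/
def OptimalDefender {D A : Type*} [Fintype D] [Fintype A]
    (u : D → A → ℝ) (xd : D → ℝ) : Prop :=
  Mixed xd ∧ ∀ xd' : D → ℝ, Mixed xd' → maxPure u xd ≤ maxPure u xd'

/-- An attacker mixed strategy is optimal if it maximizes `min_{d ∈ D} u(d, x_a)` over all
attacker mixed strategies. -/
def OptimalAttacker {D A : Type*} [Fintype D] [Fintype A]
    (u : D → A → ℝ) (xa : A → ℝ) : Prop :=
  Mixed xa ∧ ∀ xa' : A → ℝ, Mixed xa' → minPure u xa' ≤ minPure u xa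

/-- `(x_d, x_a)` is a Nash equilibrium of the zero-sum game with attacker payoff `u`:
`u(x_d', x_a) ≥ u(x_d, x_a) ≥ u(x_d, x_a')` for all mixed strategies `x_d'`, `x_a'`. -/
def IsNash {D A : Type*} [Fintype D] [Fintype A] (u : D → A → ℝ)
    (xd : D → ℝ) (xa : A → ℝ) : Prop :=
  Mixed xd ∧ Mixed xa ∧
  (∀ xd' : D → ℝ, Mixed xd' → expPay u xd xa ≤ expPay u xd' xa) ∧
  (∀ xa' : A → ℝ, Mixed xa' → expPay u xd xa' ≤ expPay u xd xa)


/-- The binary-utility game of Example 1: the defender picks `U = true` or `D = false`, the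
attacker picks a pair of such moves, and the attacker gets `1` exactly when its path shares
no edge with the defender's path. -/
noncomputable def uBin : Bool → Bool × Bool → ℝ := fun d a =>
  if (d = false ∧ a = (true, true)) ∨ (d = true ∧ a = (false, false)) then 1 else 0

/-- The attacker strategy putting probability `1/2` on each of `UU` and `DD`. -/
noncomputable def xaStar : Bool × Bool → ℝ := fun a =>
  if a = (true, true) ∨ a = (false, false) then 1 / 2 else 0

lemma sum_bool' (f : Bool → ℝ) : ∑ b, f b = f true + f false := by
  simp [Fintype.sum_bool]

lemma sum_pair (f : Bool × Bool → ℝ) :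
    ∑ a, f a = f (true, true) + f (true, false) + f (false, true) + f (false, false) := by
  rw [Fintype.sum_prod_type]
  simp [Fintype.sum_bool]; ring

lemma iInf_bool (f : Bool → ℝ) : ⨅ b, f b = min (f true) (f false) := by
  apply le_antisymm
  · exact le_min (ciInf_le (Finite.bddBelow_range f) true)
      (ciInf_le (Finite.bddBelow_range f) false)
  · exact le_ciInf fun b => by cases b <;> simp [min_le_left, min_le_right]

lemma minPure_eq (xa : Bool × Bool → ℝ) :
    minPure uBin xa = min (xa (false, false)) (xa (true, true)) := by
  unfold minPure
  rw [iInf_bool]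
  congr 1 <;> · rw [sum_pair]; simp [uBin]

lemma nash_opt {D A : Type*} [Fintype D] [Fintype A] [Nonempty D] [DecidableEq D]
    (u : D → A → ℝ) (xd : D → ℝ) (xa : A → ℝ) (h : IsNash u xd xa) :
    OptimalAttacker u xa := by
  obtain ⟨hxd, hxa, hd, ha⟩ := h
  refine ⟨hxa, fun xa' hxa' => ?_⟩
  have step1 : minPure u xa' ≤ expPay u xd xa' := by
    have hrow : ∀ d, minPure u xa' ≤ ∑ a, xa' a * u d a := fun d =>
      ciInf_le (Finite.bddBelow_range _) d
    calc minPure u xa' = ∑ d, xd d * minPure u xa' := by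
          rw [← Finset.sum_mul, hxd.2, one_mul]
      _ ≤ ∑ d, xd d * ∑ a, xa' a * u d a := by
          apply Finset.sum_le_sum
          intro d _
          exact mul_le_mul_of_nonneg_left (hrow d) (hxd.1 d)
      _ = expPay u xd xa' := by
          unfold expPay
          congr 1; ext d
          rw [Finset.mul_sum]; congr 1; ext a; ring
  have step3 : expPay u xd xa ≤ minPure u xa := by
    apply le_ciInf
    intro d
    have hmix : Mixed (fun d' => if d' = d then (1:ℝ) else 0) := by
      constructor
      · intro s; positivity
      · simp
    have := hd _ hmix
    calc expPay u xd xa ≤ expPay u (fun d' => if d' = d then (1:ℝ) else 0) xa := this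
      _ = ∑ a, xa a * u d a := by
          unfold expPay
          rw [Finset.sum_eq_single d]
          · congr 1; ext a; simp [mul_comm]
          · intro b _ hb
            simp [hb]
          · simp
  exact le_trans step1 (le_trans (ha xa' hxa') step3)

/-- There is a finite zero-sum game with no Markovian (product-form) attacker equilibrium
strategy: in the binary-utility game of Example 1, the unique optimal attacker strategy
`x_a*` (probability `1/2` on each of `UU` and `DD`) is not a product distribution, hence no
Nash equilibrium of this game has an attacker strategy of product form. -/
theorem no_markovian_nash_equilibrium :
    OptimalAttacker uBin xaStar ∧
    (∀ xa : Bool × Bool → ℝ, OptimalAttacker uBin xa → xa = xaStar) ∧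
    (¬ ∃ p q : ℝ, 0 ≤ p ∧ p ≤ 1 ∧ 0 ≤ q ∧ q ≤ 1 ∧
        xaStar (true, true) = p * q ∧
        xaStar (true, false) = p * (1 - q) ∧
        xaStar (false, true) = (1 - p) * q ∧
        xaStar (false, false) = (1 - p) * (1 - q)) ∧
    ∀ (xd : Bool → ℝ) (xa : Bool × Bool → ℝ), IsNash uBin xd xa →
      ¬ ∃ p q : ℝ, 0 ≤ p ∧ p ≤ 1 ∧ 0 ≤ q ∧ q ≤ 1 ∧
          xa (true, true) = p * q ∧
          xa (true, false) = p * (1 - q) ∧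
          xa (false, true) = (1 - p) * q ∧
          xa (false, false) = (1 - p) * (1 - q) := by
  have hstarval : minPure uBin xaStar = 1 / 2 := by
    rw [minPure_eq]; simp [xaStar]
  have hopt : OptimalAttacker uBin xaStar := by
    constructor
    · constructor
      · intro s; unfold xaStar; split <;> norm_num
      · rw [sum_pair]; simp [xaStar]; norm_num
    · intro xa' hxa'
      rw [minPure_eq, hstarval]
      have hsum : xa' (true, true) + xa' (true, false) + xa' (false, true)
          + xa' (false, false) = 1 := by rw [← sum_pair]; exact hxa'.2
      have h1 := hxa'.1 (true, false)
      have h2 := hxa'.1 (false, true)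
      rcases le_total (xa' (false, false)) (xa' (true, true)) with h | h
      · rw [min_eq_left h]; linarith
      · rw [min_eq_right h]; linarith
  have huniq : ∀ xa : Bool × Bool → ℝ, OptimalAttacker uBin xa → xa = xaStar := by
    intro xa ⟨hmix, hmax⟩
    have hge : (1:ℝ) / 2 ≤ minPure uBin xa := by
      rw [← hstarval]; exact hmax xaStar hopt.1
    rw [minPure_eq] at hge
    have hFF := le_trans hge (min_le_left _ _)
    have hTT := le_trans hge (min_le_right _ _)
    have hsum : xa (true, true) + xa (true, false) + xa (false, true)
        + xa (false, false) = 1 := by rw [← sum_pair]; exact hmix.2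
    have h1 := hmix.1 (true, false)
    have h2 := hmix.1 (false, true)
    funext a
    rcases a with ⟨b1, b2⟩
    cases b1 <;> cases b2 <;> simp [xaStar] <;> linarith
  have hnoprod : ¬ ∃ p q : ℝ, 0 ≤ p ∧ p ≤ 1 ∧ 0 ≤ q ∧ q ≤ 1 ∧
      xaStar (true, true) = p * q ∧
      xaStar (true, false) = p * (1 - q) ∧
      xaStar (false, true) = (1 - p) * q ∧
      xaStar (false, false) = (1 - p) * (1 - q) := by
    rintro ⟨p, q, _, _, _, _, h1, h2, h3, h4⟩
    simp [xaStar] at h1 h2 h3 h4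
    rcases h2 with h2 | h2 <;> rcases h3 with h3 | h3 <;> nlinarith
  refine ⟨hopt, huniq, hnoprod, ?_⟩
  intro xd xa hn hprod
  have hxa := huniq xa (nash_opt uBin xd xa hn)
  rw [hxa] at hprod
  exact hnoprod hprod
end
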